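/- arXiv:2211.12275 — 11 statements merged into one kernel-verified Lean document; each statement's English description precedes it below -/
import Mathlib

section
/- Let X be an integrable real random variable with mean μ = E[X], and suppose there are constants σ > 0 and b > 0 such that Var(X) ≤ σ² and |X − μ| ≤ b almost surely. Then for every t ∈ ℝ, E[e^{tX}] ≤ e^{tμ} · (σ² e^{|t| b} + b² e^{−|t| σ² / b}) / (b² + σ²). -/
open MeasureTheory ProbabilityTheory Real

private lemma exp_quad_bounds (x : ℝ) :
    (x ≤ 0 → Real.exp x ≤ 1 + x + x^2/2) ∧ (0 ≤ x → 1 + x + x^2/2 ≤ Real.exp x) := by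
  have hmono : Monotone (fun x : ℝ => Real.exp x - (1 + x + x^2/2)) := by
    apply monotone_of_hasDerivAt_nonneg (f' := fun x => Real.exp x - (1 + x))
    · intro x
      have h1 : HasDerivAt (fun x : ℝ => Real.exp x - (1 + x + x^2/2))
          (Real.exp x - (0 + 1 + (2 * x^1)/2)) x := by
        exact (Real.hasDerivAt_exp x).sub
          (((hasDerivAt_const x (1:ℝ)).add (hasDerivAt_id x)).add
            ((hasDerivAt_pow 2 x).div_const 2))
      convert h1 using 1; ring
    · intro x
      simp only [Pi.zero_apply, sub_nonneg]
      linarith [Real.add_one_le_exp x]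
  have h0 : Real.exp 0 - (1 + 0 + (0:ℝ)^2/2) = 0 := by simp
  constructor
  · intro hx
    have := hmono hx
    simp only at this
    rw [h0] at this
    linarith
  · intro hx
    have := hmono hx
    simp only at this
    rw [h0] at this
    linarith

private lemma chi_nonneg (u : ℝ) : 0 ≤ (u - 1) * Real.exp u + 1 := by
  have hd : ∀ x : ℝ, HasDerivAt (fun u : ℝ => (u - 1) * Real.exp u + 1) (x * Real.exp x) x := by
    intro x
    have h1 : HasDerivAt (fun u : ℝ => (u - 1) * Real.exp u + 1)
        (1 * Real.exp x + (x - 1) * Real.exp x) x :=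
      (((hasDerivAt_id x).sub_const 1).mul (Real.hasDerivAt_exp x)).add_const 1
    convert h1 using 1; ring
  rcases le_or_gt 0 u with hu | hu
  · have hmono : MonotoneOn (fun u : ℝ => (u - 1) * Real.exp u + 1) (Set.Ici 0) := by
      apply monotoneOn_of_hasDerivWithinAt_nonneg (f' := fun x => x * Real.exp x)
        (convex_Ici 0)
      · exact (Continuous.continuousOn (by continuity))
      · intro x hx
        exact (hd x).hasDerivWithinAt
      · intro x hx
        rw [interior_Ici] at hx
        exact mul_nonneg (le_of_lt hx) (Real.exp_pos x).le
    have := hmono (Set.self_mem_Ici) hu hu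
    simpa using this
  · have hanti : AntitoneOn (fun u : ℝ => (u - 1) * Real.exp u + 1) (Set.Iic 0) := by
      apply antitoneOn_of_hasDerivWithinAt_nonpos (f' := fun x => x * Real.exp x)
        (convex_Iic 0)
      · exact (Continuous.continuousOn (by continuity))
      · intro x hx
        exact (hd x).hasDerivWithinAt
      · intro x hx
        rw [interior_Iic] at hx
        exact mul_nonpos_of_nonpos_of_nonneg (le_of_lt hx) (Real.exp_pos x).le
    have := hanti (Set.mem_Iic.mpr hu.le) (Set.self_mem_Iic) hu.le
    simpa using this

private lemma psi_nonneg {u : ℝ} (hu : 0 ≤ u) : 0 ≤ (u - 2) * Real.exp u + u + 2 := by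
  have hmono : Monotone (fun u : ℝ => (u - 2) * Real.exp u + u + 2) := by
    apply monotone_of_hasDerivAt_nonneg (f' := fun x => (x - 1) * Real.exp x + 1)
    · intro x
      have h1 : HasDerivAt (fun u : ℝ => (u - 2) * Real.exp u + u + 2)
          (1 * Real.exp x + (x - 2) * Real.exp x + 1) x :=
        ((((hasDerivAt_id x).sub_const 2).mul (Real.hasDerivAt_exp x)).add
          (hasDerivAt_id x)).add_const 2
      convert h1 using 1; ring
    · intro x
      exact chi_nonneg x
  have := hmono hu
  simp only at this
  have h0 : ((0:ℝ) - 2) * Real.exp 0 + 0 + 2 = 0 := by simp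
  rw [h0] at this
  linarith

private lemma phi_mono : MonotoneOn (fun u : ℝ => (Real.exp u - 1 - u)/u^2) (Set.Ioi 0) := by
  apply monotoneOn_of_hasDerivWithinAt_nonneg (convex_Ioi 0)
    (f' := fun u => ((Real.exp u - 1) * u^2 - (Real.exp u - 1 - u) * (2 * u^1)) / (u^2)^2)
  · apply ContinuousOn.div
    · exact Continuous.continuousOn (by continuity)
    · exact Continuous.continuousOn (by continuity)
    · intro x hx
      have : (0:ℝ) < x := hx
      positivity
  · intro x hx
    rw [interior_Ioi] at hx
    have hx0 : (x:ℝ) ≠ 0 := ne_of_gt hx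
    have h1 : HasDerivAt (fun u : ℝ => (Real.exp u - 1 - u)/u^2)
        (((Real.exp x - 1) * x^2 - (Real.exp x - 1 - x) * (2 * x^1)) / (x^2)^2) x := by
      have hnum : HasDerivAt (fun u : ℝ => Real.exp u - 1 - u) (Real.exp x - 1) x := by
        have := ((Real.hasDerivAt_exp x).sub_const 1).sub (hasDerivAt_id x)
        exact this
      exact hnum.div (hasDerivAt_pow 2 x) (pow_ne_zero 2 hx0)
    exact h1.hasDerivWithinAt
  · intro x hx
    rw [interior_Ioi] at hx
    have hx0 : (0:ℝ) < x := hx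
    apply div_nonneg _ (by positivity)
    have : (Real.exp x - 1) * x^2 - (Real.exp x - 1 - x) * (2 * x^1) =
        x * ((x - 2) * Real.exp x + x + 2) := by ring
    rw [this]
    exact mul_nonneg hx0.le (psi_nonneg hx0.le)

private lemma lemP {u A : ℝ} (hA : 0 ≤ A) (huA : u ≤ A) :
    A^2 * (Real.exp u - 1 - u) ≤ u^2 * (Real.exp A - 1 - A) := by
  rcases le_or_gt u 0 with hu | hu
  · have h1 : Real.exp u - 1 - u ≤ u^2/2 := by
      have := (exp_quad_bounds u).1 hu
      linarith
    have h2 : A^2/2 ≤ Real.exp A - 1 - A := by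
      have := (exp_quad_bounds A).2 hA
      linarith
    have h3 := mul_le_mul_of_nonneg_left h1 (sq_nonneg A)
    have h4 := mul_le_mul_of_nonneg_left h2 (sq_nonneg u)
    nlinarith
  · have hA0 : 0 < A := lt_of_lt_of_le hu huA
    have := phi_mono (Set.mem_Ioi.mpr hu) (Set.mem_Ioi.mpr hA0) huA
    simp only at this
    rw [div_le_div_iff₀ (by positivity) (by positivity)] at this
    nlinarith [this]

private lemma lemQ {s b c y : ℝ} (hs : 0 ≤ s) (hb : 0 < b) (hc : 0 < c) (hy : y ≤ b) :
    Real.exp (s*y) ≤ Real.exp (-(s*c))*(1 + s*(y+c)) +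
      ((Real.exp (s*b) - Real.exp (-(s*c))*(1 + s*(b+c)))/(b+c)^2)*(y+c)^2 := by
  have hbc : (0:ℝ) < (b+c)^2 := by positivity
  have hQ : Real.exp (s*y) * (b+c)^2 ≤ Real.exp (-(s*c))*(1 + s*(y+c)) * (b+c)^2 +
      (Real.exp (s*b) - Real.exp (-(s*c))*(1 + s*(b+c))) * (y+c)^2 := by
    rcases eq_or_lt_of_le hs with hs0 | hs0
    · rw [← hs0]; simp
    · have hu : s*(y+c) ≤ s*(b+c) := by nlinarith
      have hA : 0 ≤ s*(b+c) := by positivity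
      have hP := lemP hA hu
      have key : (b+c)^2*(Real.exp (s*(y+c)) - 1 - s*(y+c)) ≤
          (y+c)^2*(Real.exp (s*(b+c)) - 1 - s*(b+c)) := by
        have hs2 : (0:ℝ) < s^2 := by positivity
        rw [← mul_le_mul_iff_right₀ hs2]
        nlinarith [hP]
      have hD : (0:ℝ) < Real.exp (-(s*c)) := Real.exp_pos _
      have e1 : Real.exp (s*y) = Real.exp (-(s*c)) * Real.exp (s*(y+c)) := by
        rw [← Real.exp_add]; ring_nf
      have e2 : Real.exp (s*b) = Real.exp (-(s*c)) * Real.exp (s*(b+c)) := by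
        rw [← Real.exp_add]; ring_nf
      rw [e1, e2]
      nlinarith [mul_le_mul_of_nonneg_left key hD.le]
  have hrhs : Real.exp (-(s*c))*(1 + s*(y+c)) +
      ((Real.exp (s*b) - Real.exp (-(s*c))*(1 + s*(b+c)))/(b+c)^2)*(y+c)^2 =
      (Real.exp (-(s*c))*(1 + s*(y+c)) * (b+c)^2 +
        (Real.exp (s*b) - Real.exp (-(s*c))*(1 + s*(b+c))) * (y+c)^2) / (b+c)^2 := by
    field_simp
  rw [hrhs, le_div_iff₀ hbc]
  exact hQ

/-- Refined Bennett moment-generating-function estimate (equation (1) of the paper):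
if `X` is integrable with mean `m`, variance at most `σ²` and `|X - m| ≤ b` a.s., then
`E[e^{tX}] ≤ e^{tm} (σ² e^{|t|b} + b² e^{-|t|σ²/b})/(b²+σ²)`. -/
theorem refined_bennett_mgf_bound
    {Ω : Type*} [MeasurableSpace Ω] (μ : Measure Ω) [IsProbabilityMeasure μ]
    (X : Ω → ℝ) (hX : Integrable X μ)
    (σ b : ℝ) (hσ : 0 < σ) (hb : 0 < b)
    (hvar : variance X μ ≤ σ ^ 2)
    (hbound : ∀ᵐ ω ∂μ, |X ω - μ[X]| ≤ b)
    (t : ℝ) :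
    (∫ ω, Real.exp (t * X ω) ∂μ) ≤
      Real.exp (t * μ[X]) *
        (σ ^ 2 * Real.exp (|t| * b) + b ^ 2 * Real.exp (-(|t| * σ ^ 2) / b))
          / (b ^ 2 + σ ^ 2) := by
  set m := μ[X] with hm
  set s := |t| with hsdef
  have hs : 0 ≤ s := abs_nonneg t
  set c : ℝ := σ^2/b with hcdef
  have hc : 0 < c := by positivity
  set ε : ℝ := if 0 ≤ t then 1 else -1 with hεdef
  have hε2 : ε^2 = 1 := by rw [hεdef]; split_ifs <;> norm_num
  have hεt : ε * t = s := by
    rw [hεdef, hsdef]; split_ifs with h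
    · rw [one_mul, abs_of_nonneg h]
    · rw [neg_one_mul, abs_of_neg (not_le.mp h)]
  have hεa : |ε| = 1 := by rw [hεdef]; split_ifs <;> norm_num
  set Z : Ω → ℝ := fun ω => ε * (X ω - m) with hZdef
  have hexp_eq : ∀ ω, Real.exp (t * X ω) = Real.exp (t*m) * Real.exp (s * Z ω) := by
    intro ω
    rw [← Real.exp_add]
    congr 1
    rw [hZdef, ← hεt]
    ring_nf
    linear_combination (t * m - t * X ω) * hε2
  have hZb : ∀ᵐ ω ∂μ, |Z ω| ≤ b := by
    filter_upwards [hbound] with ω h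
    rw [hZdef]
    simp only
    rw [abs_mul, hεa, one_mul]
    exact h
  have hYint : Integrable (fun ω => X ω - m) μ := hX.sub (integrable_const m)
  have hZint : Integrable Z μ := hYint.const_mul ε
  have hZmeas := hZint.aestronglyMeasurable
  have hZ0 : ∫ ω, Z ω ∂μ = 0 := by
    rw [hZdef]
    simp only
    rw [integral_const_mul, integral_sub hX (integrable_const m), integral_const]
    simp [hm]
  have hZsq : ∀ ω, (Z ω)^2 = (X ω - m)^2 := by
    intro ω; rw [hZdef]; simp only; rw [mul_pow, hε2, one_mul]
  -- Memℒp and variance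
  have hYmem : MemLp (fun ω => X ω - m) ⊤ μ := by
    apply memLp_top_of_bound hYint.aestronglyMeasurable b
    filter_upwards [hbound] with ω h
    simpa [Real.norm_eq_abs] using h
  have hXmem : MemLp X 2 μ := by
    have h2 := (hYmem.mono_exponent (le_top : (2:ENNReal) ≤ ⊤)).add
      (memLp_const (E := ℝ) m)
    have : (fun ω => X ω - m) + (fun _ => m) = X := by funext ω; simp
    rwa [this] at h2
  have hvar' : ∫ ω, (X ω - m)^2 ∂μ ≤ σ^2 := by
    have hveq := variance_eq_integral hXmem.aestronglyMeasurable.aemeasurable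
    calc ∫ ω, (X ω - m)^2 ∂μ = variance X μ := by
          rw [hveq]
      _ ≤ σ^2 := hvar
  have hZ2le : ∫ ω, (Z ω)^2 ∂μ ≤ σ^2 := by
    calc ∫ ω, (Z ω)^2 ∂μ = ∫ ω, (X ω - m)^2 ∂μ := by
          exact integral_congr_ae (Filter.Eventually.of_forall hZsq)
      _ ≤ σ^2 := hvar'
  -- integrability facts
  have hint1 : Integrable (fun ω => Real.exp (s * Z ω)) μ := by
    apply Integrable.mono' (integrable_const (Real.exp (s*b)))
      (Real.continuous_exp.comp_aestronglyMeasurable (hZmeas.const_mul s))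
    filter_upwards [hZb] with ω h
    rw [Real.norm_eq_abs, abs_of_pos (Real.exp_pos _)]
    exact Real.exp_le_exp.mpr (mul_le_mul_of_nonneg_left (le_of_abs_le h) hs)
  have hintZ2 : Integrable (fun ω => (Z ω)^2) μ := by
    apply Integrable.mono' (integrable_const (b^2))
      ((continuous_pow 2).comp_aestronglyMeasurable hZmeas)
    filter_upwards [hZb] with ω h
    rw [Real.norm_eq_abs, abs_of_nonneg (sq_nonneg _)]
    nlinarith [abs_le.mp h]
  have hintsq : Integrable (fun ω => (Z ω + c)^2) μ := by
    have : (fun ω => (Z ω + c)^2) = fun ω => (Z ω)^2 + ((2*c) * Z ω + c^2) := by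
      funext ω; ring
    rw [this]
    have haux : Integrable (fun ω => (2*c) * Z ω + c^2) μ :=
      (hZint.const_mul (2*c)).add (integrable_const (c^2))
    exact hintZ2.add haux
  set γ : ℝ := (Real.exp (s*b) - Real.exp (-(s*c))*(1 + s*(b+c)))/(b+c)^2 with hγdef
  have hγ : 0 ≤ γ := by
    apply div_nonneg _ (by positivity)
    have h2 : Real.exp (-(s*c)) * (1 + s*(b+c)) ≤ Real.exp (-(s*c)) * Real.exp (s*(b+c)) :=
      mul_le_mul_of_nonneg_left (by linarith [Real.add_one_le_exp (s*(b+c))]) (Real.exp_pos _).le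
    rw [← Real.exp_add] at h2
    have : -(s*c) + s*(b+c) = s*b := by ring
    rw [this] at h2
    linarith
  have hintlin : Integrable (fun ω => Real.exp (-(s*c))*(1+s*c) +
      (Real.exp (-(s*c))*s) * Z ω + γ * (Z ω + c)^2) μ :=
    ((integrable_const _).add (hZint.const_mul _)).add (hintsq.const_mul γ)
  have hptwise : ∀ᵐ ω ∂μ, Real.exp (s * Z ω) ≤ Real.exp (-(s*c))*(1+s*c) +
      (Real.exp (-(s*c))*s) * Z ω + γ * (Z ω + c)^2 := by
    filter_upwards [hZb] with ω h
    refine le_trans (lemQ hs hb hc (le_of_abs_le h)) (le_of_eq ?_)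
    rw [hγdef]; ring
  have hexpand : ∫ ω, (Z ω + c)^2 ∂μ = (∫ ω, (Z ω)^2 ∂μ) + c^2 := by
    have heq : (fun ω => (Z ω + c)^2) = fun ω => (Z ω)^2 + ((2*c) * Z ω + c^2) := by
      funext ω; ring
    have haux : Integrable (fun ω => (2*c) * Z ω + c^2) μ :=
      (hZint.const_mul (2*c)).add (integrable_const (c^2))
    have haux2 : Integrable (fun ω => (2*c) * Z ω) μ := hZint.const_mul (2*c)
    rw [heq, integral_add hintZ2 haux, integral_add haux2 (integrable_const (c^2)),
      integral_const_mul, hZ0]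
    simp
  have hI : ∫ ω, Real.exp (s * Z ω) ∂μ ≤
      Real.exp (-(s*c))*(1+s*c) + γ * (σ^2 + c^2) := by
    calc ∫ ω, Real.exp (s * Z ω) ∂μ
        ≤ ∫ ω, (Real.exp (-(s*c))*(1+s*c) + (Real.exp (-(s*c))*s) * Z ω
            + γ * (Z ω + c)^2) ∂μ := integral_mono_ae hint1 hintlin hptwise
      _ = Real.exp (-(s*c))*(1+s*c) + (Real.exp (-(s*c))*s) * (∫ ω, Z ω ∂μ)
            + γ * ∫ ω, (Z ω + c)^2 ∂μ := by
          have ha1 : Integrable (fun ω => (Real.exp (-(s*c))*s) * Z ω) μ :=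
            hZint.const_mul _
          have ha2 : Integrable (fun ω => Real.exp (-(s*c))*(1+s*c) +
              (Real.exp (-(s*c))*s) * Z ω) μ := (integrable_const _).add ha1
          have ha3 : Integrable (fun ω => γ * (Z ω + c)^2) μ := hintsq.const_mul γ
          rw [integral_add ha2 ha3, integral_add (integrable_const _) ha1,
            integral_const_mul, integral_const_mul, integral_const]
          simp [integral_const_mul]
      _ = Real.exp (-(s*c))*(1+s*c) + γ * ((∫ ω, (Z ω)^2 ∂μ) + c^2) := by
          rw [hZ0, hexpand]; ring
      _ ≤ Real.exp (-(s*c))*(1+s*c) + γ * (σ^2 + c^2) := by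
          have := mul_le_mul_of_nonneg_left (add_le_add_right hZ2le (c^2)) hγ
          linarith
  have hcomb : Real.exp (-(s*c))*(1+s*c) + γ * (σ^2 + c^2) =
      (σ^2 * Real.exp (s*b) + b^2 * Real.exp (-(s*c))) / (b^2 + σ^2) := by
    rw [hγdef, hcdef]
    have hb0 : b ≠ 0 := ne_of_gt hb
    have hbs : b^2 + σ^2 ≠ 0 := by positivity
    field_simp
    ring
  have harg : -(s * σ^2)/b = -(s*c) := by rw [hcdef]; field_simp
  have hlhs : (∫ ω, Real.exp (t * X ω) ∂μ) = Real.exp (t*m) * ∫ ω, Real.exp (s * Z ω) ∂μ := by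
    rw [show (fun ω => Real.exp (t * X ω)) = fun ω => Real.exp (t*m) * Real.exp (s * Z ω)
      from funext hexp_eq, integral_const_mul]
  rw [hlhs, mul_div_assoc, harg]
  apply mul_le_mul_of_nonneg_left _ (Real.exp_pos _).le
  rw [← hcomb] at *
  exact hI.trans_eq hcomb
end

section
/- Let N ≥ 1 and let X_1, …, X_N be independent integrable real random variables on a probability space such that |X_k − E[X_k]| ≤ b_k almost surely and Var(X_k) ≤ σ_k² for each k, where b_k > 0 and σ_k > 0. Set γ_k = σ_k²/b_k². Then for every vector λ ∈ ℝ^N (entries of arbitrary sign), every d ≥ 0 and every t > 0, P[ ∑_{k=1}^N λ_k (X_k − E[X_k]) ≥ d ] ≤ e^{−t d} · ∏_{k=1}^N (γ_k e^{t |λ_k| b_k} + e^{−t |λ_k| b_k γ_k}) / (1 + γ_k). -/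
open MeasureTheory ProbabilityTheory Real Finset

lemma bennett_exp_le_quadratic {a : ℝ} (ha : a ≤ 0) : Real.exp a ≤ 1 + a + a ^ 2 / 2 := by
  have h1 : 1 + (-a) + (-a) ^ 2 / 2 ≤ Real.exp (-a) := Real.quadratic_le_exp_of_nonneg (by linarith)
  have h2 : Real.exp a * Real.exp (-a) = 1 := by
    rw [← Real.exp_add]; simp
  nlinarith [Real.exp_pos a, Real.exp_pos (-a), sq_nonneg a, sq_nonneg (a ^ 2)]

lemma bennett_key {a A : ℝ} (ha : a ≤ A) (hA : 0 ≤ A) :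
    (Real.exp a - a - 1) * A ^ 2 ≤ (Real.exp A - A - 1) * a ^ 2 := by
  rcases le_or_gt a 0 with h0 | h0
  · have h1 := bennett_exp_le_quadratic h0
    have h2 : 1 + A + A ^ 2 / 2 ≤ Real.exp A := Real.quadratic_le_exp_of_nonneg hA
    nlinarith [sq_nonneg a, sq_nonneg A]
  · have hsum : ∀ x : ℝ, Summable (fun n : ℕ => x ^ n / n.factorial) :=
      fun x => Real.summable_pow_div_factorial x
    have hs2 : ∀ x : ℝ, Summable (fun n : ℕ => x ^ (n + 2) / (n + 2).factorial) :=
      fun x => (summable_nat_add_iff (f := fun n : ℕ => x ^ n / n.factorial) 2).mpr (hsum x)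
    have hshift : ∀ x : ℝ, Real.exp x - x - 1 = ∑' n : ℕ, x ^ (n + 2) / (n + 2).factorial := by
      intro x
      have hs1 : Summable (fun n : ℕ => x ^ (n + 1) / (n + 1).factorial) :=
        (summable_nat_add_iff (f := fun n : ℕ => x ^ n / n.factorial) 1).mpr (hsum x)
      have e1 : (∑' n : ℕ, x ^ n / n.factorial)
          = x ^ 0 / (0:ℕ).factorial + ∑' n : ℕ, x ^ (n + 1) / (n + 1).factorial :=
        Summable.tsum_eq_zero_add (hsum x)
      have e2 : (∑' n : ℕ, x ^ (n + 1) / (n + 1).factorial)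
          = x ^ (0 + 1) / (0 + 1:ℕ).factorial + ∑' n : ℕ, x ^ (n + 1 + 1) / (n + 1 + 1).factorial :=
        Summable.tsum_eq_zero_add hs1
      have hexp : Real.exp x = ∑' n : ℕ, x ^ n / n.factorial := by
        rw [Real.exp_eq_exp_ℝ, NormedSpace.exp_eq_tsum_div]
      rw [hexp, e1, e2]
      have : (∑' n : ℕ, x ^ (n + 1 + 1) / (n + 1 + 1).factorial)
          = ∑' n : ℕ, x ^ (n + 2) / (n + 2).factorial := by
        exact tsum_congr fun n => by norm_num
      rw [this]
      norm_num [Nat.factorial]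
      ring
    rw [hshift a, hshift A, ← tsum_mul_right, ← tsum_mul_right]
    refine Summable.tsum_le_tsum ?_ ((hs2 a).mul_right _) ((hs2 A).mul_right _)
    intro n
    have h1 : a ^ n ≤ A ^ n := pow_le_pow_left₀ h0.le ha n
    rw [div_mul_eq_mul_div, div_mul_eq_mul_div]
    have hnum : a ^ (n + 2) * A ^ 2 ≤ A ^ (n + 2) * a ^ 2 := by
      calc a ^ (n + 2) * A ^ 2 = a ^ n * (a ^ 2 * A ^ 2) := by ring
        _ ≤ A ^ n * (a ^ 2 * A ^ 2) := mul_le_mul_of_nonneg_right h1 (by positivity)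
        _ = A ^ (n + 2) * a ^ 2 := by ring
    gcongr

lemma bennett_key2 {s z L : ℝ} (hs : 0 ≤ s) (hz : z ≤ L) (hL : 0 < L) :
    (Real.exp (s * z) - s * z - 1) * L ^ 2 ≤ (Real.exp (s * L) - s * L - 1) * z ^ 2 := by
  rcases eq_or_lt_of_le hs with h | h
  · simp [← h]
  · have hk := bennett_key (a := s * z) (A := s * L)
      (by nlinarith) (by positivity)
    have hs2 : (0:ℝ) < s ^ 2 := by positivity
    have h2 : s ^ 2 * ((Real.exp (s * z) - s * z - 1) * L ^ 2)
        ≤ s ^ 2 * ((Real.exp (s * L) - s * L - 1) * z ^ 2) := by nlinarith [hk]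
    exact (mul_le_mul_iff_right₀ hs2).mp h2

lemma bennett_mgf_aux {Ω : Type*} [MeasurableSpace Ω] (μ : Measure Ω) [IsProbabilityMeasure μ]
    (Y : Ω → ℝ) (hY : Measurable Y) (b v : ℝ) (hb : 0 < b) (hv : 0 < v)
    (hbound : ∀ᵐ ω ∂μ, |Y ω| ≤ b) (hmean : μ[Y] = 0)
    (hvar : μ[fun ω => (Y ω) ^ 2] ≤ v) (s : ℝ) (hs : 0 ≤ s) :
    μ[fun ω => Real.exp (s * Y ω)] ≤
      (v / b ^ 2 * Real.exp (s * b) + Real.exp (-(s * b * (v / b ^ 2)))) / (1 + v / b ^ 2) := by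
  set γ := v / b ^ 2 with hγdef
  have hγ : 0 < γ := by positivity
  set c := γ * b with hcdef
  have hc : 0 < c := by positivity
  set L := b + c with hLdef
  have hL : 0 < L := by positivity
  set δ := Real.exp (-(s * c)) * (Real.exp (s * L) - s * L - 1) / L ^ 2 with hδdef
  have hδ : 0 ≤ δ := by
    have h1 := Real.add_one_le_exp (s * L)
    apply div_nonneg (mul_nonneg (Real.exp_pos _).le (by linarith)) (by positivity)
  have hL2 : (0:ℝ) < L ^ 2 := by positivity
  have hpt : ∀ ω, |Y ω| ≤ b →
      Real.exp (s * Y ω) ≤ Real.exp (-(s * c)) * (1 + s * (Y ω + c)) + δ * (Y ω + c) ^ 2 := by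
    intro ω hω
    set y := Y ω with hy
    have hyb : y ≤ b := (abs_le.mp hω).2
    have hz : y + c ≤ L := by rw [hLdef]; linarith
    have hk := bennett_key2 (s := s) (z := y + c) (L := L) hs hz hL
    have he : Real.exp (s * y) = Real.exp (-(s * c)) * Real.exp (s * (y + c)) := by
      rw [← Real.exp_add]; ring_nf
    have h4 : Real.exp (s * (y + c)) - s * (y + c) - 1
        ≤ (Real.exp (s * L) - s * L - 1) * (y + c) ^ 2 / L ^ 2 := by
      rw [le_div_iff₀ hL2]; linarith [hk]
    have hE : Real.exp (s * (y + c)) ≤ 1 + s * (y + c)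
        + (Real.exp (s * L) - s * L - 1) * (y + c) ^ 2 / L ^ 2 := by linarith
    calc Real.exp (s * y) = Real.exp (-(s * c)) * Real.exp (s * (y + c)) := he
      _ ≤ Real.exp (-(s * c)) * (1 + s * (y + c)
            + (Real.exp (s * L) - s * L - 1) * (y + c) ^ 2 / L ^ 2) :=
          mul_le_mul_of_nonneg_left hE (Real.exp_pos _).le
      _ = Real.exp (-(s * c)) * (1 + s * (y + c)) + δ * (y + c) ^ 2 := by
          rw [hδdef]; ring
  have hInt1 : Integrable Y μ := by
    refine Integrable.mono' (integrable_const b) hY.aestronglyMeasurable ?_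
    filter_upwards [hbound] with ω hω; rwa [Real.norm_eq_abs]
  have hInt2 : Integrable (fun ω => (Y ω) ^ 2) μ := by
    refine Integrable.mono' (integrable_const (b ^ 2)) ((hY.pow_const 2).aestronglyMeasurable) ?_
    filter_upwards [hbound] with ω hω
    rw [Real.norm_eq_abs]
    calc |(Y ω) ^ 2| = |Y ω| ^ 2 := abs_pow _ _
      _ ≤ b ^ 2 := pow_le_pow_left₀ (abs_nonneg _) hω 2
  have hIntExp : Integrable (fun ω => Real.exp (s * Y ω)) μ := by
    refine Integrable.mono' (integrable_const (Real.exp (s * b)))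
      ((hY.const_mul s).exp.aestronglyMeasurable) ?_
    filter_upwards [hbound] with ω hω
    rw [Real.norm_eq_abs, Real.abs_exp]
    exact Real.exp_le_exp.mpr (mul_le_mul_of_nonneg_left (abs_le.mp hω).2 hs)
  set A0 := Real.exp (-(s * c)) * (1 + s * c) + δ * c ^ 2 with hA0
  set A1 := Real.exp (-(s * c)) * s + 2 * δ * c with hA1
  have hmono : μ[fun ω => Real.exp (s * Y ω)] ≤ μ[fun ω => A0 + A1 * Y ω + δ * (Y ω) ^ 2] := by
    refine integral_mono_ae hIntExp
      (((integrable_const A0).add (hInt1.const_mul A1)).add (hInt2.const_mul δ)) ?_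
    filter_upwards [hbound] with ω hω
    have := hpt ω hω
    calc Real.exp (s * Y ω) ≤ Real.exp (-(s * c)) * (1 + s * (Y ω + c)) + δ * (Y ω + c) ^ 2 := this
      _ = A0 + A1 * Y ω + δ * (Y ω) ^ 2 := by rw [hA0, hA1]; ring
  have hcalc : μ[fun ω => A0 + A1 * Y ω + δ * (Y ω) ^ 2]
      = A0 + A1 * μ[Y] + δ * μ[fun ω => (Y ω) ^ 2] := by
    have hI1 : Integrable (fun ω => A0 + A1 * Y ω) μ :=
      (integrable_const A0).add (hInt1.const_mul A1)
    have hI2 : Integrable (fun ω => δ * (Y ω) ^ 2) μ := hInt2.const_mul δ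
    rw [integral_add hI1 hI2, integral_add (integrable_const A0) (hInt1.const_mul A1),
        integral_const, integral_const_mul, integral_const_mul]
    simp [measure_univ]
  have hfinal : μ[fun ω => Real.exp (s * Y ω)] ≤ A0 + δ * v := by
    have h5 := hmono.trans_eq hcalc
    rw [hmean] at h5
    have h2 : δ * μ[fun ω => (Y ω) ^ 2] ≤ δ * v := mul_le_mul_of_nonneg_left hvar hδ
    linarith
  have heq : A0 + δ * v = (γ * Real.exp (s * b) + Real.exp (-(s * b * γ))) / (1 + γ) := by
    have hv2 : v = γ * b ^ 2 := by rw [hγdef]; field_simp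
    have he1 : Real.exp (s * L) = Real.exp (s * b) * Real.exp (s * c) := by
      rw [← Real.exp_add, hLdef]; ring_nf
    have he3 : (-(s * b * γ)) = -(s * c) := by rw [hcdef]; ring
    have hEinv : Real.exp (-(s * c)) = (Real.exp (s * c))⁻¹ := Real.exp_neg _
    have h1γ : (0:ℝ) < 1 + γ := by linarith
    rw [hA0, hδdef, he3, hv2, he1, hEinv, hLdef, hcdef]
    have hne : Real.exp (s * (γ * b)) ≠ 0 := Real.exp_ne_zero _
    field_simp
    ring
  exact hfinal.trans heq.le

set_option maxHeartbeats 1000000 in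
/-- Two-sided-support refined Bennett inequality (equation (3) of the paper). -/
theorem refined_bennett_two_sided
    {Ω : Type*} [MeasurableSpace Ω] (μ : Measure Ω) [IsProbabilityMeasure μ]
    (N : ℕ) (hN : 1 ≤ N)
    (X : Fin N → Ω → ℝ)
    (hmeas : ∀ k, Measurable (X k))
    (hindep : iIndepFun X μ)
    (hint : ∀ k, Integrable (X k) μ)
    (b σ : Fin N → ℝ) (hb : ∀ k, 0 < b k) (hσ : ∀ k, 0 < σ k)
    (hbound : ∀ k, ∀ᵐ ω ∂μ, |X k ω - μ[X k]| ≤ b k)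
    (hvar : ∀ k, variance (X k) μ ≤ (σ k) ^ 2)
    (γ : Fin N → ℝ) (hγ : ∀ k, γ k = (σ k) ^ 2 / (b k) ^ 2)
    (lam : Fin N → ℝ)
    (d : ℝ) (hd : 0 ≤ d) (t : ℝ) (ht : 0 < t) :
    μ {ω | d ≤ ∑ k, lam k * (X k ω - μ[X k])} ≤
      ENNReal.ofReal (Real.exp (-(t * d)) *
        ∏ k, (γ k * Real.exp (t * |lam k| * b k) + Real.exp (-(t * |lam k| * b k * γ k)))
          / (1 + γ k)) := by
  classical
  set Z : Fin N → Ω → ℝ := fun k ω => lam k * (X k ω - μ[X k]) with hZ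
  have hmeasZ : ∀ k, Measurable (Z k) := fun k => ((hmeas k).sub_const _).const_mul _
  have hindepZ : iIndepFun Z μ := by
    have hg : ∀ k : Fin N, Measurable (fun x : ℝ => lam k * (x - μ[X k])) := by
      intro k; fun_prop
    exact hindep.comp _ hg
  have hγpos : ∀ k, 0 < γ k := fun k => by rw [hγ k]; exact div_pos (pow_pos (hσ k) 2) (pow_pos (hb k) 2)
  have hmgf : mgf (fun ω => ∑ k, lam k * (X k ω - μ[X k])) μ t = ∏ k, mgf (Z k) μ t := by
    have hfun : (fun ω => ∑ k, lam k * (X k ω - μ[X k])) = ∑ k, Z k := by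
      funext ω; rw [Finset.sum_apply]
    rw [hfun]
    exact hindepZ.mgf_sum hmeasZ Finset.univ
  have hfac : ∀ k, mgf (Z k) μ t ≤
      (γ k * Real.exp (t * |lam k| * b k) + Real.exp (-(t * |lam k| * b k * γ k))) / (1 + γ k) := by
    intro k
    have h1γ : (0:ℝ) < 1 + γ k := by linarith [hγpos k]
    rcases eq_or_ne (lam k) 0 with h0 | h0
    · have hZ0 : Z k = 0 := by funext ω; simp [hZ, h0]
      have hm1 : mgf (Z k) μ t = 1 := by rw [hZ0, mgf_zero_fun]; simp
      rw [hm1]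
      simp only [h0, abs_zero, mul_zero, zero_mul, Real.exp_zero, mul_one, neg_zero]
      rw [add_comm (γ k) 1, div_self h1γ.ne']
    · have habs : 0 < |lam k| := abs_pos.mpr h0
      have hb' : 0 < |lam k| * b k := mul_pos habs (hb k)
      have hl2 : 0 < (lam k) ^ 2 := by nlinarith [sq_abs (lam k)]
      have hv' : 0 < (lam k) ^ 2 * (σ k) ^ 2 := mul_pos hl2 (pow_pos (hσ k) 2)
      have hmeanZ : μ[Z k] = 0 := by
        have : μ[Z k] = lam k * (μ[X k] - μ[X k]) := by
          rw [hZ]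
          rw [integral_const_mul, integral_sub (hint k) (integrable_const _), integral_const]
          simp
        simp [this]
      have hbZ : ∀ᵐ ω ∂μ, |Z k ω| ≤ |lam k| * b k := by
        filter_upwards [hbound k] with ω hω
        rw [hZ]
        simp only [abs_mul]
        exact mul_le_mul_of_nonneg_left hω (abs_nonneg _)
      have hmem : MemLp (X k) 2 μ := by
        have haebd : ∀ᵐ ω ∂μ, ‖X k ω‖ ≤ b k + |μ[X k]| := by
          filter_upwards [hbound k] with ω hω
          rw [Real.norm_eq_abs]
          calc |X k ω| = |(X k ω - μ[X k]) + μ[X k]| := by ring_nf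
            _ ≤ |X k ω - μ[X k]| + |μ[X k]| := abs_add_le _ _
            _ ≤ b k + |μ[X k]| := by linarith
        exact (memLp_top_of_bound (hmeas k).aestronglyMeasurable _ haebd).mono_exponent
          le_top
      have hvX : μ[fun ω => (X k ω - μ[X k]) ^ 2] ≤ (σ k) ^ 2 := by
        calc μ[fun ω => (X k ω - μ[X k]) ^ 2] = variance (X k) μ := by
              rw [variance_eq_integral (hmeas k).aemeasurable]
          _ ≤ (σ k) ^ 2 := hvar k
      have hvZ : μ[fun ω => (Z k ω) ^ 2] ≤ (lam k) ^ 2 * (σ k) ^ 2 := by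
        have he : (fun ω => (Z k ω) ^ 2) = fun ω => (lam k) ^ 2 * (X k ω - μ[X k]) ^ 2 := by
          funext ω; rw [hZ]; ring
        rw [he, integral_const_mul]
        exact mul_le_mul_of_nonneg_left hvX hl2.le
      have hbmain := bennett_mgf_aux μ (Z k) (hmeasZ k) (|lam k| * b k)
        ((lam k) ^ 2 * (σ k) ^ 2) hb' hv' hbZ hmeanZ hvZ t ht.le
      have hγeq : (lam k) ^ 2 * (σ k) ^ 2 / (|lam k| * b k) ^ 2 = γ k := by
        rw [hγ k, mul_pow, sq_abs, mul_div_mul_left _ _ hl2.ne']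
      rw [hγeq] at hbmain
      have harr : (γ k * Real.exp (t * (|lam k| * b k))
            + Real.exp (-(t * (|lam k| * b k) * γ k))) / (1 + γ k)
          = (γ k * Real.exp (t * |lam k| * b k)
            + Real.exp (-(t * |lam k| * b k * γ k))) / (1 + γ k) := by
        ring_nf
      exact le_trans hbmain (le_of_eq harr)
  have hSm : Measurable (fun ω => ∑ k, lam k * (X k ω - μ[X k])) := by
    apply Finset.measurable_sum
    intro k _
    exact hmeasZ k
  have hae : ∀ᵐ ω ∂μ, ∀ k, |X k ω - μ[X k]| ≤ b k := ae_all_iff.mpr hbound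
  have hB : Integrable (fun ω => Real.exp (t * ∑ k, lam k * (X k ω - μ[X k]))) μ := by
    refine Integrable.mono' (integrable_const (Real.exp (t * ∑ k, |lam k| * b k)))
      ((hSm.const_mul t).exp.aestronglyMeasurable) ?_
    filter_upwards [hae] with ω hω
    rw [Real.norm_eq_abs, Real.abs_exp]
    apply Real.exp_le_exp.mpr
    apply mul_le_mul_of_nonneg_left ?_ ht.le
    apply Finset.sum_le_sum
    intro k _
    calc lam k * (X k ω - μ[X k]) ≤ |lam k * (X k ω - μ[X k])| := le_abs_self _
      _ = |lam k| * |X k ω - μ[X k]| := abs_mul _ _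
      _ ≤ |lam k| * b k := mul_le_mul_of_nonneg_left (hω k) (abs_nonneg _)
  have hch : (μ {ω | d ≤ ∑ k, lam k * (X k ω - μ[X k])}).toReal ≤
      Real.exp (-t * d) * mgf (fun ω => ∑ k, lam k * (X k ω - μ[X k])) μ t := by
    exact measure_ge_le_exp_mul_mgf d ht.le hB
  have hprod : mgf (fun ω => ∑ k, lam k * (X k ω - μ[X k])) μ t
      ≤ ∏ k, (γ k * Real.exp (t * |lam k| * b k)
          + Real.exp (-(t * |lam k| * b k * γ k))) / (1 + γ k) := by
    rw [hmgf]
    exact Finset.prod_le_prod (fun k _ => mgf_nonneg) (fun k _ => hfac k)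
  have hreal : (μ {ω | d ≤ ∑ k, lam k * (X k ω - μ[X k])}).toReal
      ≤ Real.exp (-(t * d)) * ∏ k, (γ k * Real.exp (t * |lam k| * b k)
          + Real.exp (-(t * |lam k| * b k * γ k))) / (1 + γ k) := by
    refine hch.trans ?_
    rw [neg_mul]
    exact mul_le_mul_of_nonneg_left hprod (Real.exp_pos _).le
  calc μ {ω | d ≤ ∑ k, lam k * (X k ω - μ[X k])}
      = ENNReal.ofReal ((μ {ω | d ≤ ∑ k, lam k * (X k ω - μ[X k])}).toReal) :=
        (ENNReal.ofReal_toReal (measure_ne_top μ _)).symm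
    _ ≤ _ := ENNReal.ofReal_le_ofReal hreal
end

section
/- Let N ≥ 1, and for k = 1,…,N let b_k > 0 and σ_k > 0; set γ_k = σ_k²/b_k², τ⁻ = ∏_{k=1}^N γ_k/(1+γ_k), b̄ = (1/N)∑_{k=1}^N b_k, φ_α(t) = ln τ⁻ + N t (b̄ − α) + ∑_{k=1}^N ln(1 + γ_k^{−1} e^{−t b_k (1+γ_k)}) for t ≥ 0, and φ*_α = inf_{t ≥ 0} φ_α(t). Then: (a) the map α ↦ φ*_α is (weakly) decreasing on [0, b̄]; (b) φ*_0 = 0; (c) φ*_{b̄} = ln τ⁻, i.e. inf_{t ≥ 0} φ_{b̄}(t) = ln τ⁻; (d) for every α > b̄ the function φ_α is unbounded below on [0,∞), i.e. inf_{t ≥ 0} φ_α(t) = −∞. -/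
open Real Finset

/-- `γ k = σ k ^ 2 / b k ^ 2`. -/
noncomputable def bennettGamma {N : ℕ} (b σ : Fin N → ℝ) (k : Fin N) : ℝ :=
  (σ k) ^ 2 / (b k) ^ 2

/-- `b̄ = (1/N) ∑ b k`. -/
noncomputable def bennettBbar {N : ℕ} (b : Fin N → ℝ) : ℝ :=
  (∑ k, b k) / N

/-- `τ⁻ = ∏ γ k / (1 + γ k)`. -/
noncomputable def bennettTauMinus {N : ℕ} (b σ : Fin N → ℝ) : ℝ :=
  ∏ k, bennettGamma b σ k / (1 + bennettGamma b σ k)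

/-- The function `φ_α(t)` of the paper. -/
noncomputable def bennettPhi {N : ℕ} (b σ : Fin N → ℝ) (α t : ℝ) : ℝ :=
  Real.log (bennettTauMinus b σ) + N * t * (bennettBbar b - α) +
    ∑ k, Real.log (1 + (bennettGamma b σ k)⁻¹ *
      Real.exp (-(t * b k * (1 + bennettGamma b σ k))))

/-- `φ*_α = inf_{t ≥ 0} φ_α(t)`. -/
noncomputable def bennettPhiStar {N : ℕ} (b σ : Fin N → ℝ) (α : ℝ) : ℝ :=
  sInf (bennettPhi b σ α '' Set.Ici 0)

lemma bennett_key_ineq (s γ : ℝ) (hγ : 0 < γ) :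
    (1 + γ) * Real.exp (-s) ≤ γ + Real.exp (-(s * (1 + γ))) := by
  have h1 : Real.exp (-(s * (1 + γ))) = Real.exp (-s) * Real.exp (-(s * γ)) := by
    rw [← Real.exp_add]; ring_nf
  have h2 : (-(s * γ)) + 1 ≤ Real.exp (-(s * γ)) := Real.add_one_le_exp _
  have h3 : s + 1 ≤ Real.exp s := Real.add_one_le_exp s
  have h4 : Real.exp (-s) * Real.exp s = 1 := by rw [← Real.exp_add]; simp
  nlinarith [Real.exp_pos (-s), Real.exp_pos (-(s * γ)), Real.exp_pos s,
    mul_nonneg (le_of_lt (Real.exp_pos (-s))) (by linarith : (0:ℝ) ≤ Real.exp (-(s*γ)) - (1 - s*γ)),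
    mul_nonneg (mul_nonneg hγ.le (le_of_lt (Real.exp_pos (-s)))) (by linarith : (0:ℝ) ≤ Real.exp s - (1 + s))]

lemma bennett_log_frac (γ : ℝ) (hγ : 0 < γ) :
    Real.log (γ / (1 + γ)) = - Real.log (1 + γ⁻¹) := by
  have h : γ / (1 + γ) = (1 + γ⁻¹)⁻¹ := by
    field_simp
    ring
  rw [h, Real.log_inv]

lemma bennett_gamma_pos {N : ℕ} {b σ : Fin N → ℝ} (hb : ∀ k, 0 < b k) (hσ : ∀ k, 0 < σ k)
    (k : Fin N) : 0 < bennettGamma b σ k :=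
  div_pos (pow_pos (hσ k) 2) (pow_pos (hb k) 2)

lemma bennett_log_tau {N : ℕ} {b σ : Fin N → ℝ} (hb : ∀ k, 0 < b k) (hσ : ∀ k, 0 < σ k) :
    Real.log (bennettTauMinus b σ)
      = ∑ k, Real.log (bennettGamma b σ k / (1 + bennettGamma b σ k)) := by
  unfold bennettTauMinus
  refine Real.log_prod (fun k _ => ?_)
  have hγ := bennett_gamma_pos hb hσ k
  exact ne_of_gt (div_pos hγ (by linarith))

lemma bennett_log_tau' {N : ℕ} {b σ : Fin N → ℝ} (hb : ∀ k, 0 < b k) (hσ : ∀ k, 0 < σ k) :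
    Real.log (bennettTauMinus b σ)
      = - ∑ k, Real.log (1 + (bennettGamma b σ k)⁻¹) := by
  rw [bennett_log_tau hb hσ, ← Finset.sum_neg_distrib]
  exact Finset.sum_congr rfl fun k _ => bennett_log_frac _ (bennett_gamma_pos hb hσ k)

/-- per-term lower bound -/
lemma bennett_term_lb (bk γ t : ℝ) (hγ : 0 < γ) (ht : 0 ≤ t) :
    0 ≤ t * bk + Real.log (γ / (1 + γ))
      + Real.log (1 + γ⁻¹ * Real.exp (-(t * bk * (1 + γ)))) := by
  set E := Real.exp (-(t * bk * (1 + γ))) with hE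
  have hEpos : 0 < E := Real.exp_pos _
  have h1γ : (0:ℝ) < 1 + γ := by linarith
  have harg : (0:ℝ) < 1 + γ⁻¹ * E := by positivity
  have hkey : (1 + γ) * Real.exp (-(t * bk)) ≤ γ + E := by
    have := bennett_key_ineq (t * bk) γ hγ
    have heq : -(t * bk * (1 + γ)) = -(t * bk * (1 + γ)) := rfl
    convert this using 3 <;> ring
  have hprod : γ / (1 + γ) * (1 + γ⁻¹ * E) = (γ + E) / (1 + γ) := by
    field_simp
  have hlog : Real.log (γ / (1 + γ)) + Real.log (1 + γ⁻¹ * E)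
      = Real.log ((γ + E) / (1 + γ)) := by
    rw [← Real.log_mul (ne_of_gt (div_pos hγ h1γ)) (ne_of_gt harg), hprod]
  rw [add_assoc, hlog]
  have : -(t * bk) ≤ Real.log ((γ + E) / (1 + γ)) := by
    rw [Real.le_log_iff_exp_le (div_pos (by positivity) h1γ)]
    rw [le_div_iff₀ h1γ]
    linarith [hkey]
  linarith

/-- Study of `φ*_α` (Lemma 3 (i) of the paper): monotonicity on `[0, b̄]`,
the values `φ*_0 = 0` and `φ*_{b̄} = ln τ⁻`, and divergence to `-∞` for `α > b̄`. -/
theorem bennettPhiStar_properties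
    (N : ℕ) (hN : 1 ≤ N)
    (b σ : Fin N → ℝ) (hb : ∀ k, 0 < b k) (hσ : ∀ k, 0 < σ k) :
    (∀ α₁ α₂ : ℝ, 0 ≤ α₁ → α₁ ≤ α₂ → α₂ ≤ bennettBbar b →
      bennettPhiStar b σ α₂ ≤ bennettPhiStar b σ α₁) ∧
    bennettPhiStar b σ 0 = 0 ∧
    bennettPhiStar b σ (bennettBbar b) = Real.log (bennettTauMinus b σ) ∧
    (∀ α : ℝ, bennettBbar b < α → ∀ c : ℝ, ∃ t : ℝ, 0 ≤ t ∧ bennettPhi b σ α t < c) := by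
  have hNR : (0:ℝ) < (N:ℝ) := by exact_mod_cast Nat.lt_of_lt_of_le Nat.zero_lt_one hN
  set γ := bennettGamma b σ with hγdef
  have hγ : ∀ k, 0 < γ k := bennett_gamma_pos hb hσ
  set L := Real.log (bennettTauMinus b σ) with hL
  -- φ_α(0) = 0 for any α
  have hphi0 : ∀ α : ℝ, bennettPhi b σ α 0 = 0 := by
    intro α
    unfold bennettPhi
    simp only [mul_zero, zero_mul, mul_one, zero_add, add_zero, neg_zero, Real.exp_zero]
    rw [bennett_log_tau' hb hσ]
    simp
  -- sum term nonneg
  have hsum_nonneg : ∀ t : ℝ, 0 ≤ ∑ k, Real.log (1 + (γ k)⁻¹ *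
      Real.exp (-(t * b k * (1 + γ k)))) := by
    intro t
    refine Finset.sum_nonneg fun k _ => Real.log_nonneg ?_
    have : 0 ≤ (γ k)⁻¹ * Real.exp (-(t * b k * (1 + γ k))) :=
      mul_nonneg (inv_nonneg.mpr (hγ k).le) (Real.exp_pos _).le
    linarith
  -- lower bound for α ≤ b̄
  have hlb : ∀ α : ℝ, α ≤ bennettBbar b → ∀ t : ℝ, 0 ≤ t → L ≤ bennettPhi b σ α t := by
    intro α hα t ht
    unfold bennettPhi
    have h1 : 0 ≤ (N:ℝ) * t * (bennettBbar b - α) :=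
      mul_nonneg (mul_nonneg hNR.le ht) (by linarith)
    have h2 := hsum_nonneg t
    rw [← hL]
    linarith
  -- lower bound for α = 0 : φ_0(t) ≥ 0
  have hlb0 : ∀ t : ℝ, 0 ≤ t → 0 ≤ bennettPhi b σ 0 t := by
    intro t ht
    unfold bennettPhi
    rw [bennett_log_tau hb hσ, sub_zero]
    have hNt : (N:ℝ) * t * bennettBbar b = ∑ k, t * b k := by
      unfold bennettBbar
      rw [← Finset.mul_sum]
      field_simp
    rw [hNt, ← Finset.sum_add_distrib, ← Finset.sum_add_distrib]
    refine Finset.sum_nonneg fun k _ => ?_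
    have := bennett_term_lb (b k) (γ k) t (hγ k) ht
    linarith
  have hne : ∀ α : ℝ, (bennettPhi b σ α '' Set.Ici 0).Nonempty :=
    fun α => ⟨bennettPhi b σ α 0, ⟨0, Set.self_mem_Ici, rfl⟩⟩
  have hbdd : ∀ α : ℝ, α ≤ bennettBbar b → BddBelow (bennettPhi b σ α '' Set.Ici 0) := by
    intro α hα
    refine ⟨L, ?_⟩
    rintro y ⟨t, ht, rfl⟩
    exact hlb α hα t ht
  refine ⟨?_, ?_, ?_, ?_⟩
  · -- monotonicity
    intro α₁ α₂ hα₁ h12 h2b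
    unfold bennettPhiStar
    refine le_csInf (hne α₁) ?_
    rintro y ⟨t, ht, rfl⟩
    refine csInf_le_of_le (hbdd α₂ h2b) ⟨t, ht, rfl⟩ ?_
    unfold bennettPhi
    have : (N:ℝ) * t * (bennettBbar b - α₂) ≤ (N:ℝ) * t * (bennettBbar b - α₁) := by
      apply mul_le_mul_of_nonneg_left (by linarith)
      have ht' : (0:ℝ) ≤ t := ht
      positivity
    linarith
  · -- φ*_0 = 0
    unfold bennettPhiStar
    apply le_antisymm
    · exact csInf_le_of_le ⟨0, by rintro y ⟨t, ht, rfl⟩; exact hlb0 t ht⟩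
        ⟨0, Set.self_mem_Ici, rfl⟩ (le_of_eq (hphi0 0))
    · refine le_csInf (hne 0) ?_
      rintro y ⟨t, ht, rfl⟩
      exact hlb0 t ht
  · -- φ*_{b̄} = L
    unfold bennettPhiStar
    apply le_antisymm
    · -- sInf ≤ L : use limit as t → ∞
      refine le_of_forall_pos_le_add fun ε hε => ?_
      have htend : Filter.Tendsto (fun t => ∑ k, Real.log (1 + (γ k)⁻¹ *
          Real.exp (-(t * b k * (1 + γ k))))) Filter.atTop (nhds 0) := by
        have h0 : (0:ℝ) = ∑ k : Fin N, (0:ℝ) := by simp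
        rw [h0]
        refine tendsto_finset_sum _ fun k _ => ?_
        have hc : (0:ℝ) < b k * (1 + γ k) := by
          have := hγ k; have := hb k; positivity
        have h1 : Filter.Tendsto (fun t : ℝ => t * (b k * (1 + γ k))) Filter.atTop
            Filter.atTop := Filter.Tendsto.atTop_mul_const hc Filter.tendsto_id
        have h2 : Filter.Tendsto (fun t : ℝ => -(t * b k * (1 + γ k))) Filter.atTop
            Filter.atBot := by
          have : (fun t : ℝ => -(t * b k * (1 + γ k)))
              = (fun x : ℝ => -x) ∘ (fun t : ℝ => t * (b k * (1 + γ k))) := by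
            funext t; simp [mul_assoc]
          rw [this]
          exact Filter.tendsto_neg_atTop_atBot.comp h1
        have h3 : Filter.Tendsto (fun t : ℝ => Real.exp (-(t * b k * (1 + γ k))))
            Filter.atTop (nhds 0) := Real.tendsto_exp_atBot.comp h2
        have h4 : Filter.Tendsto (fun t : ℝ => 1 + (γ k)⁻¹ *
            Real.exp (-(t * b k * (1 + γ k)))) Filter.atTop (nhds 1) := by
          have := (h3.const_mul ((γ k)⁻¹)).const_add (1:ℝ)
          simpa using this
        have h5 : Filter.Tendsto (fun t : ℝ => Real.log (1 + (γ k)⁻¹ *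
            Real.exp (-(t * b k * (1 + γ k))))) Filter.atTop (nhds (Real.log 1)) :=
          ((Real.continuousAt_log one_ne_zero).tendsto.comp h4)
        simpa using h5
      obtain ⟨t, hts, ht0⟩ :=
        ((htend.eventually (Iio_mem_nhds hε)).and (Filter.eventually_ge_atTop (0:ℝ))).exists
      refine csInf_le_of_le (hbdd _ le_rfl) ⟨t, ht0, rfl⟩ ?_
      unfold bennettPhi
      rw [← hL]
      simp only [sub_self, mul_zero, add_zero]
      have : ∑ k, Real.log (1 + (γ k)⁻¹ * Real.exp (-(t * b k * (1 + γ k)))) < ε := hts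
      linarith
    · refine le_csInf (hne _) ?_
      rintro y ⟨t, ht, rfl⟩
      exact hlb _ le_rfl t ht
  · -- divergence for α > b̄
    intro α hα c
    set d := (N:ℝ) * (α - bennettBbar b) with hd
    have hdpos : 0 < d := mul_pos hNR (by linarith)
    refine ⟨max 0 (-c / d + 1), le_max_left _ _, ?_⟩
    set t := max 0 (-c / d + 1) with htdef
    have ht0 : 0 ≤ t := le_max_left _ _
    have htgt : -c / d < t := lt_of_lt_of_le (by linarith) (le_max_right _ _)
    have hub : bennettPhi b σ α t ≤ -(t * d) := by
      unfold bennettPhi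
      rw [bennett_log_tau' hb hσ]
      have hsum : ∑ k, Real.log (1 + (γ k)⁻¹ * Real.exp (-(t * b k * (1 + γ k))))
          ≤ ∑ k, Real.log (1 + (γ k)⁻¹) := by
        refine Finset.sum_le_sum fun k _ => ?_
        apply Real.log_le_log (by
          have h0 : 0 ≤ (γ k)⁻¹ * Real.exp (-(t * b k * (1 + γ k))) :=
            mul_nonneg (inv_nonneg.mpr (hγ k).le) (Real.exp_pos _).le
          linarith)
        have hE : Real.exp (-(t * b k * (1 + γ k))) ≤ 1 := by
          rw [Real.exp_le_one_iff]
          have h1 := hγ k; have h2 := hb k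
          have : 0 ≤ t * b k * (1 + γ k) :=
            mul_nonneg (mul_nonneg ht0 h2.le) (by linarith)
          linarith
        have : (γ k)⁻¹ * Real.exp (-(t * b k * (1 + γ k))) ≤ (γ k)⁻¹ * 1 := by
          apply mul_le_mul_of_nonneg_left hE (inv_nonneg.mpr (hγ k).le)
        linarith
      have hNt : (N:ℝ) * t * (bennettBbar b - α) = -(t * d) := by rw [hd]; ring
      linarith
    have : -(t * d) < c := by
      have : -c / d < t := htgt
      have h1 : -c < t * d := by
        rw [div_lt_iff₀ hdpos] at this
        linarith
      linarith
    linarith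
end

section
/- Let N ≥ 1, and for k = 1,…,N let b_k > 0 and σ_k > 0; set γ_k = σ_k²/b_k², τ⁻ = ∏_{k=1}^N γ_k/(1+γ_k), b̄ = (1/N)∑_{k=1}^N b_k, and φ_α(t) = ln τ⁻ + N t (b̄ − α) + ∑_{k=1}^N ln(1 + γ_k^{−1} e^{−t b_k (1+γ_k)}) for t ≥ 0. For each k set m_k = ln(2 + γ_k^{−1}) / (b_k² (1+γ_k)). Then for every α with 0 < α < min_k b_k, the unique minimizer t*_α of φ_α over [0,∞) satisfies t*_α ≥ α · min_k m_k. -/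
open Real Finset

/-- `m k = ln(2 + γ k⁻¹) / (b k ^ 2 (1 + γ k))`. -/
noncomputable def bennettM {N : ℕ} (b σ : Fin N → ℝ) (k : Fin N) : ℝ :=
  Real.log (2 + (bennettGamma b σ k)⁻¹) / ((b k) ^ 2 * (1 + bennettGamma b σ k))

/-- Bernoulli-type estimate: `(2+c)^β ≤ 1 + β(1+c)` for `β ∈ [0,1]`, `c > 0`,
phrased via `exp` and `log`. -/
lemma bennett_exp_aux (c β : ℝ) (hc : 0 < c) (hβ0 : 0 ≤ β) (hβ1 : β ≤ 1) :
    Real.exp (β * Real.log (2 + c)) ≤ 1 + β * (1 + c) := by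
  have h2c : (0:ℝ) < 2 + c := by linarith
  have h := convexOn_exp.2 (Set.mem_univ (0:ℝ)) (Set.mem_univ (Real.log (2 + c)))
      (by linarith : (0:ℝ) ≤ 1 - β) hβ0 (by ring)
  simp only [smul_eq_mul, mul_zero, zero_add, Real.exp_zero, Real.exp_log h2c] at h
  calc Real.exp (β * Real.log (2 + c)) ≤ (1 - β) * 1 + β * (2 + c) := h
    _ = 1 + β * (1 + c) := by ring

/-- The key pointwise estimate. -/
lemma bennett_helper (b α γ x : ℝ) (hb : 0 < b) (hα : 0 < α) (hαb : α < b)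
    (hγ : 0 < γ) (hx : x < (α / b) * Real.log (2 + γ⁻¹)) :
    γ * b * (1 - Real.exp (-x)) < α * (γ + Real.exp (-x)) := by
  set c : ℝ := γ⁻¹ with hcdef
  have hc : 0 < c := inv_pos.2 hγ
  set β : ℝ := α / b with hβdef
  have hβ0 : 0 < β := div_pos hα hb
  have hβ1 : β < 1 := (div_lt_one hb).2 hαb
  set L : ℝ := Real.log (2 + c) with hLdef
  have hL : Real.exp (β * L) ≤ 1 + β * (1 + c) := bennett_exp_aux c β hc hβ0.le hβ1.le
  have hM : (0:ℝ) < 1 + β * (1 + c) := by positivity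
  -- exp(-βL) * (1 + β(1+c)) ≥ 1
  have h1 : 1 ≤ Real.exp (-(β * L)) * (1 + β * (1 + c)) := by
    have := mul_le_mul_of_nonneg_left hL (Real.exp_pos (-(β * L))).le
    rwa [← Real.exp_add, neg_add_cancel, Real.exp_zero] at this
  set E : ℝ := Real.exp (-x) with hEdef
  have hE0 : 0 < E := Real.exp_pos _
  have hEgt : Real.exp (-(β * L)) < E := Real.exp_lt_exp.2 (by linarith)
  have h2 : 1 < E * (1 + β * (1 + c)) := by
    calc (1:ℝ) ≤ Real.exp (-(β * L)) * (1 + β * (1 + c)) := h1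
      _ < E * (1 + β * (1 + c)) := by
          exact mul_lt_mul_of_pos_right hEgt hM
  -- key : 1 - β < E * (1 + β * c)
  have key : 1 - β < E * (1 + β * c) := by
    rcases le_or_gt 1 E with h | h
    · nlinarith [mul_pos hβ0 hc]
    · nlinarith [mul_nonneg hβ0.le (by linarith : (0:ℝ) ≤ 1 - E)]
  -- translate to b, α, γ
  have hαβ : α = β * b := by rw [hβdef, div_mul_cancel₀ α hb.ne']
  have hcγ : γ * c = 1 := mul_inv_cancel₀ (ne_of_gt hγ)
  have hkey2 := mul_lt_mul_of_pos_left key hb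
  -- b*(1-β) < b*(E*(1+β*c)); multiply by γ
  have hkey3 := mul_lt_mul_of_pos_left hkey2 hγ
  have e1 : γ * (b * (E * (1 + β * c))) = γ * b * E + β * b * E := by
    calc γ * (b * (E * (1 + β * c))) = γ * b * E + β * b * E * (γ * c) := by ring
      _ = γ * b * E + β * b * E := by rw [hcγ]; ring
  rw [e1] at hkey3
  rw [hαβ]
  nlinarith [hkey3]

/-- Key estimate in the termination proof of the double bisection algorithm
(Theorem 4 of the paper): the minimizer `t*_α` of `φ_α` over `[0,∞)` satisfies
`t*_α ≥ α · min_k m_k`. -/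
theorem bennett_minimizer_lower_bound
    (N : ℕ) (hN : 1 ≤ N)
    (hne : (Finset.univ : Finset (Fin N)).Nonempty)
    (b σ : Fin N → ℝ) (hb : ∀ k, 0 < b k) (hσ : ∀ k, 0 < σ k)
    (α : ℝ) (hα : 0 < α) (hαb : α < Finset.univ.inf' hne b)
    (tstar : ℝ) (htstar0 : 0 ≤ tstar)
    (htstar : IsMinOn (bennettPhi b σ α) (Set.Ici 0) tstar) :
    α * Finset.univ.inf' hne (bennettM b σ) ≤ tstar := by
  by_contra hcon
  push_neg at hcon
  set γ : Fin N → ℝ := bennettGamma b σ with hγdef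
  have hγ : ∀ k, 0 < γ k := fun k => div_pos (pow_pos (hσ k) 2) (pow_pos (hb k) 2)
  have hm : ∀ k, 0 < bennettM b σ k := by
    intro k
    apply div_pos
    · apply Real.log_pos
      have := inv_pos.2 (hγ k)
      linarith
    · have := hγ k
      have := hb k
      positivity
  set T : ℝ := α * Finset.univ.inf' hne (bennettM b σ) with hTdef
  have hT : 0 < T := by
    apply mul_pos hα
    exact (Finset.lt_inf'_iff hne).2 fun k _ => hm k
  have hαk : ∀ k, α < b k := fun k =>
    lt_of_lt_of_le hαb (Finset.inf'_le _ (Finset.mem_univ k))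
  -- derivative of φ
  set D : ℝ → ℝ := fun t => (N:ℝ) * (bennettBbar b - α) +
    ∑ k, ((γ k)⁻¹ * (Real.exp (-(t * b k * (1 + γ k))) * -(b k * (1 + γ k)))) /
      (1 + (γ k)⁻¹ * Real.exp (-(t * b k * (1 + γ k)))) with hDdef
  have hderiv : ∀ t : ℝ, HasDerivAt (bennettPhi b σ α) (D t) t := by
    intro t
    have h1 : HasDerivAt (fun t : ℝ => Real.log (bennettTauMinus b σ) +
        (N:ℝ) * t * (bennettBbar b - α)) ((N:ℝ) * (bennettBbar b - α)) t := by
      have := (((hasDerivAt_id t).const_mul (N:ℝ)).mul_const (bennettBbar b - α)).const_add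
        (Real.log (bennettTauMinus b σ))
      simpa using this
    have h2 : ∀ k ∈ Finset.univ, HasDerivAt
        (fun t : ℝ => Real.log (1 + (γ k)⁻¹ * Real.exp (-(t * b k * (1 + γ k)))))
        (((γ k)⁻¹ * (Real.exp (-(t * b k * (1 + γ k))) * -(b k * (1 + γ k)))) /
          (1 + (γ k)⁻¹ * Real.exp (-(t * b k * (1 + γ k))))) t := by
      intro k _
      have hB : HasDerivAt (fun t : ℝ => -(t * b k * (1 + γ k)))
          (-(b k * (1 + γ k))) t := by
        have := ((hasDerivAt_id t).mul_const (b k)).mul_const (1 + γ k)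
        simpa using this.fun_neg
      have hexp := hB.exp
      have hin := (hexp.const_mul ((γ k)⁻¹)).const_add (1:ℝ)
      have hpos : (0:ℝ) < 1 + (γ k)⁻¹ * Real.exp (-(t * b k * (1 + γ k))) := by
        have := inv_pos.2 (hγ k)
        positivity
      have := hin.log (ne_of_gt hpos)
      simpa [mul_comm, mul_assoc, mul_left_comm] using this
    exact h1.add (HasDerivAt.fun_sum h2)
  have hdiff : Differentiable ℝ (bennettPhi b σ α) := fun t => (hderiv t).differentiableAt
  -- D t < 0 for t ∈ (0, T)
  have hDneg : ∀ t ∈ Set.Ioo (0:ℝ) T, D t < 0 := by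
    intro t ht
    have hN0 : (N:ℝ) ≠ 0 := Nat.cast_ne_zero.2 (by omega)
    have hNb : (N:ℝ) * (bennettBbar b - α) = (∑ k, b k) - N * α := by
      rw [bennettBbar]; field_simp
    have hper : ∀ k : Fin N,
        b k + ((γ k)⁻¹ * (Real.exp (-(t * b k * (1 + γ k))) * -(b k * (1 + γ k)))) /
          (1 + (γ k)⁻¹ * Real.exp (-(t * b k * (1 + γ k)))) < α := by
      intro k
      set x : ℝ := t * b k * (1 + γ k) with hxdef
      set e : ℝ := Real.exp (-x) with hedef
      have he0 : 0 < e := Real.exp_pos _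
      have hγk := hγ k
      have hbk := hb k
      have hx : x < (α / b k) * Real.log (2 + (γ k)⁻¹) := by
        have hmk : α * bennettM b σ k * (b k * (1 + γ k)) =
            (α / b k) * Real.log (2 + (γ k)⁻¹) := by
          rw [bennettM, ← hγdef]
          field_simp
        have hTm : T ≤ α * bennettM b σ k :=
          mul_le_mul_of_nonneg_left (Finset.inf'_le _ (Finset.mem_univ k)) hα.le
        have htT : t < α * bennettM b σ k := lt_of_lt_of_le ht.2 hTm
        have hBpos : 0 < b k * (1 + γ k) := by positivity
        calc x = t * (b k * (1 + γ k)) := by rw [hxdef]; ring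
          _ < α * bennettM b σ k * (b k * (1 + γ k)) :=
              mul_lt_mul_of_pos_right htT hBpos
          _ = (α / b k) * Real.log (2 + (γ k)⁻¹) := hmk
      have hh := bennett_helper (b k) α (γ k) x hbk hα (hαk k) hγk hx
      -- hh : γ k * b k * (1 - e) < α * (γ k + e)
      have hD0 : (0:ℝ) < 1 + (γ k)⁻¹ * e := by
        have := inv_pos.2 hγk
        positivity
      have hgpos : (0:ℝ) < γ k + e := by positivity
      have hfrac : ((γ k)⁻¹ * (e * -(b k * (1 + γ k)))) / (1 + (γ k)⁻¹ * e)
          = (e * -(b k * (1 + γ k))) / (γ k + e) := by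
        rw [div_eq_div_iff hD0.ne' hgpos.ne']
        field_simp
      have h5 : (e * -(b k * (1 + γ k))) / (γ k + e) < α - b k :=
        (div_lt_iff₀ hgpos).2 (by nlinarith [hh])
      rw [hfrac]
      linarith
    have hsum : ∑ k, (b k + ((γ k)⁻¹ * (Real.exp (-(t * b k * (1 + γ k))) *
          -(b k * (1 + γ k)))) / (1 + (γ k)⁻¹ * Real.exp (-(t * b k * (1 + γ k)))))
        < ∑ _k : Fin N, α :=
      Finset.sum_lt_sum_of_nonempty hne fun k _ => hper k
    rw [Finset.sum_add_distrib, Finset.sum_const, Finset.card_univ, Fintype.card_fin,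
      nsmul_eq_mul] at hsum
    rw [hDdef]
    simp only
    rw [hNb]
    linarith
  -- φ strictly decreasing on [0, T]
  have hanti : StrictAntiOn (bennettPhi b σ α) (Set.Icc 0 T) := by
    apply strictAntiOn_of_deriv_neg (convex_Icc 0 T) hdiff.continuous.continuousOn
    intro t ht
    rw [interior_Icc] at ht
    rw [(hderiv t).deriv]
    exact hDneg t ht
  have h1 : bennettPhi b σ α T < bennettPhi b σ α tstar :=
    hanti ⟨htstar0, hcon.le⟩ ⟨hT.le, le_refl T⟩ hcon
  have h2 : bennettPhi b σ α tstar ≤ bennettPhi b σ α T :=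
    isMinOn_iff.1 htstar T hT.le
  linarith
end

section
/- Let b > 0, γ > 0, and 0 < α < b. Then ln( (α + b γ) / (γ (b − α)) ) ≥ (α / b) · ln(2 + 1/γ). -/
open Real

/-- Scalar estimate from the termination analysis of the double bisection algorithm
(Theorem 4 of the paper): for `b > 0`, `γ > 0` and `0 < α < b`,
`ln((α + bγ)/(γ(b − α))) ≥ (α/b)·ln(2 + 1/γ)`. -/
theorem log_ratio_lower_bound
    (b γ α : ℝ) (hb : 0 < b) (hγ : 0 < γ) (hα : 0 < α) (hαb : α < b) :
    (α / b) * Real.log (2 + 1 / γ) ≤ Real.log ((α + b * γ) / (γ * (b - α))) := by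
  set t : ℝ := α / b with ht
  set z : ℝ := 1 + 1 / γ with hz
  have hz0 : 0 < z := by positivity
  have ht0 : 0 < t := by positivity
  have ht1 : t ≤ 1 := by
    rw [ht, div_le_one hb]; linarith
  have h2 : (2 : ℝ) + 1 / γ = 1 + z := by rw [hz]; ring
  have h1z : (0:ℝ) < 1 + z := by linarith
  have hlog : t * Real.log (1 + z) = Real.log ((1 + z) ^ t) :=
    (Real.log_rpow h1z t).symm
  have hbern : (1 + z) ^ t ≤ 1 + t * z :=
    rpow_one_add_le_one_add_mul_self (by linarith) (le_of_lt ht0) ht1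
  have hpos : (0:ℝ) < (1 + z) ^ t := Real.rpow_pos_of_pos h1z t
  have hstep : 1 + t * z ≤ (α + b * γ) / (γ * (b - α)) := by
    rw [le_div_iff₀ (mul_pos hγ (by linarith : (0:ℝ) < b - α)), ht, hz]
    have hb' := hb.ne'
    have hγ' := hγ.ne'
    field_simp
    nlinarith [sq_nonneg α, mul_pos hα hγ, mul_pos (mul_pos hα hα) hγ]
  calc t * Real.log (2 + 1 / γ) = Real.log ((1 + z) ^ t) := by rw [h2, hlog]
    _ ≤ Real.log (1 + t * z) := Real.log_le_log hpos hbern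
    _ ≤ Real.log ((α + b * γ) / (γ * (b - α))) :=
        Real.log_le_log (by linarith [mul_pos ht0 hz0]) hstep
end

section
/- Let γ > 0 and b > 0, and define Ψ⁺_{γ,b} : ℝ × (0,∞) → ℝ by Ψ⁺_{γ,b}(y, z) = z · ln( (γ e^{y b / z} + e^{−y b γ / z}) / (1 + γ) ). Then Ψ⁺_{γ,b} is jointly convex on ℝ × (0,∞), i.e. for all (y₁,z₁), (y₂,z₂) ∈ ℝ × (0,∞) and all λ ∈ [0,1], Ψ⁺_{γ,b}(λ y₁ + (1−λ) y₂, λ z₁ + (1−λ) z₂) ≤ λ Ψ⁺_{γ,b}(y₁,z₁) + (1−λ) Ψ⁺_{γ,b}(y₂,z₂). -/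
open Real

private lemma holder2 (t a b c d : ℝ) (ht : 0 ≤ t) (ht1 : t ≤ 1)
    (ha : 0 < a) (hb : 0 < b) (hc : 0 < c) (hd : 0 < d) :
    a ^ t * b ^ (1 - t) + c ^ t * d ^ (1 - t) ≤ (a + c) ^ t * (b + d) ^ (1 - t) := by
  have hA : 0 < a + c := by linarith
  have hB : 0 < b + d := by linarith
  have ht1' : 0 ≤ 1 - t := by linarith
  have h1 : (a / (a + c)) ^ t * (b / (b + d)) ^ (1 - t) ≤ t * (a / (a + c)) + (1 - t) * (b / (b + d)) :=
    Real.geom_mean_le_arith_mean2_weighted ht ht1'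
      (div_nonneg ha.le hA.le) (div_nonneg hb.le hB.le) (by ring)
  have h2 : (c / (a + c)) ^ t * (d / (b + d)) ^ (1 - t) ≤ t * (c / (a + c)) + (1 - t) * (d / (b + d)) :=
    Real.geom_mean_le_arith_mean2_weighted ht ht1'
      (div_nonneg hc.le hA.le) (div_nonneg hd.le hB.le) (by ring)
  have ea : a ^ t = (a + c) ^ t * (a / (a + c)) ^ t := by
    rw [← Real.mul_rpow hA.le (div_nonneg ha.le hA.le), mul_div_cancel₀ _ hA.ne']
  have eb : b ^ (1 - t) = (b + d) ^ (1 - t) * (b / (b + d)) ^ (1 - t) := by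
    rw [← Real.mul_rpow hB.le (div_nonneg hb.le hB.le), mul_div_cancel₀ _ hB.ne']
  have ec : c ^ t = (a + c) ^ t * (c / (a + c)) ^ t := by
    rw [← Real.mul_rpow hA.le (div_nonneg hc.le hA.le), mul_div_cancel₀ _ hA.ne']
  have ed : d ^ (1 - t) = (b + d) ^ (1 - t) * (d / (b + d)) ^ (1 - t) := by
    rw [← Real.mul_rpow hB.le (div_nonneg hd.le hB.le), mul_div_cancel₀ _ hB.ne']
  have hsum : t * (a / (a + c)) + (1 - t) * (b / (b + d)) +
      (t * (c / (a + c)) + (1 - t) * (d / (b + d))) = 1 := by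
    field_simp
    ring
  have hP : 0 ≤ (a + c) ^ t * (b + d) ^ (1 - t) :=
    mul_nonneg (Real.rpow_nonneg hA.le _) (Real.rpow_nonneg hB.le _)
  calc a ^ t * b ^ (1 - t) + c ^ t * d ^ (1 - t)
      = (a + c) ^ t * (b + d) ^ (1 - t) *
        ((a / (a + c)) ^ t * (b / (b + d)) ^ (1 - t) +
         (c / (a + c)) ^ t * (d / (b + d)) ^ (1 - t)) := by
        rw [ea, eb, ec, ed]; ring
    _ ≤ (a + c) ^ t * (b + d) ^ (1 - t) * 1 := by
        exact mul_le_mul_of_nonneg_left (le_of_le_of_eq (add_le_add h1 h2) hsum) hP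
    _ = (a + c) ^ t * (b + d) ^ (1 - t) := by ring

/-- Log-sum-exp convexity for `S(x) = γ e^{bx} + e^{-bγx}`. -/
private lemma logS_convex (γ b : ℝ) (hγ : 0 < γ) (t x₁ x₂ : ℝ) (ht : 0 ≤ t) (ht1 : t ≤ 1) :
    Real.log (γ * Real.exp (b * (t * x₁ + (1 - t) * x₂)) +
      Real.exp (-(b * γ) * (t * x₁ + (1 - t) * x₂))) ≤
    t * Real.log (γ * Real.exp (b * x₁) + Real.exp (-(b * γ) * x₁)) +
    (1 - t) * Real.log (γ * Real.exp (b * x₂) + Real.exp (-(b * γ) * x₂)) := by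
  set S₁ := γ * Real.exp (b * x₁) + Real.exp (-(b * γ) * x₁) with hS₁
  set S₂ := γ * Real.exp (b * x₂) + Real.exp (-(b * γ) * x₂) with hS₂
  have hS₁p : 0 < S₁ := by positivity
  have hS₂p : 0 < S₂ := by positivity
  have e1 : γ * Real.exp (b * (t * x₁ + (1 - t) * x₂)) =
      (γ * Real.exp (b * x₁)) ^ t * (γ * Real.exp (b * x₂)) ^ (1 - t) := by
    rw [Real.mul_rpow hγ.le (Real.exp_pos _).le, Real.mul_rpow hγ.le (Real.exp_pos _).le,
      ← Real.exp_mul, ← Real.exp_mul,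
      show γ ^ t * Real.exp (b * x₁ * t) * (γ ^ (1 - t) * Real.exp (b * x₂ * (1 - t))) =
        γ ^ t * γ ^ (1 - t) * (Real.exp (b * x₁ * t) * Real.exp (b * x₂ * (1 - t))) from by ring,
      ← Real.rpow_add hγ, ← Real.exp_add, show t + (1 - t) = 1 from by ring, Real.rpow_one]
    ring_nf
  have e2 : Real.exp (-(b * γ) * (t * x₁ + (1 - t) * x₂)) =
      (Real.exp (-(b * γ) * x₁)) ^ t * (Real.exp (-(b * γ) * x₂)) ^ (1 - t) := by
    rw [← Real.exp_mul, ← Real.exp_mul, ← Real.exp_add]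
    ring_nf
  have key : γ * Real.exp (b * (t * x₁ + (1 - t) * x₂)) +
      Real.exp (-(b * γ) * (t * x₁ + (1 - t) * x₂)) ≤ S₁ ^ t * S₂ ^ (1 - t) := by
    rw [e1, e2]
    exact holder2 t _ _ _ _ ht ht1 (by positivity) (by positivity) (Real.exp_pos _) (Real.exp_pos _)
  have hLp : 0 < γ * Real.exp (b * (t * x₁ + (1 - t) * x₂)) +
      Real.exp (-(b * γ) * (t * x₁ + (1 - t) * x₂)) := by positivity
  calc Real.log (γ * Real.exp (b * (t * x₁ + (1 - t) * x₂)) +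
        Real.exp (-(b * γ) * (t * x₁ + (1 - t) * x₂)))
      ≤ Real.log (S₁ ^ t * S₂ ^ (1 - t)) := Real.log_le_log hLp key
    _ = t * Real.log S₁ + (1 - t) * Real.log S₂ := by
        rw [Real.log_mul (by positivity) (by positivity), Real.log_rpow hS₁p, Real.log_rpow hS₂p]

/-- The perspective-type function `Ψ⁺_{γ,b}(y,z) = z ln((γ e^{yb/z} + e^{-ybγ/z})/(1+γ))`. -/
noncomputable def PsiPlus (γ b y z : ℝ) : ℝ :=
  z * Real.log ((γ * Real.exp (y * b / z) + Real.exp (-(y * b * γ) / z)) / (1 + γ))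

/-- Proposition 6 of the paper: `Ψ⁺_{γ,b}` is jointly convex on `ℝ × (0,∞)`. -/
theorem psiPlus_convex
    (γ b : ℝ) (hγ : 0 < γ) (hb : 0 < b)
    (y₁ y₂ z₁ z₂ : ℝ) (hz₁ : 0 < z₁) (hz₂ : 0 < z₂)
    (l : ℝ) (hl : l ∈ Set.Icc (0 : ℝ) 1) :
    PsiPlus γ b (l * y₁ + (1 - l) * y₂) (l * z₁ + (1 - l) * z₂) ≤
      l * PsiPlus γ b y₁ z₁ + (1 - l) * PsiPlus γ b y₂ z₂ := by
  obtain ⟨hl0, hl1⟩ := hl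
  set z := l * z₁ + (1 - l) * z₂ with hz
  have hzp : 0 < z := by
    rcases eq_or_lt_of_le hl0 with h | h
    · rw [hz, ← h]; simpa using hz₂
    · have h1 := mul_pos h hz₁
      have h2 : 0 ≤ (1 - l) * z₂ := mul_nonneg (by linarith) hz₂.le
      rw [hz]; linarith
  set t := l * z₁ / z with hti
  have ht0 : 0 ≤ t := by positivity
  have ht1 : t ≤ 1 := by
    rw [hti, div_le_one hzp]
    nlinarith
  have hγ1 : (0:ℝ) < 1 + γ := by linarith
  -- rewrite PsiPlus as z * (log S - log (1+γ))
  have hrw : ∀ y w : ℝ, 0 < w → PsiPlus γ b y w =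
      w * (Real.log (γ * Real.exp (b * (y / w)) + Real.exp (-(b * γ) * (y / w))) - Real.log (1 + γ)) := by
    intro y w hw
    unfold PsiPlus
    rw [show y * b / w = b * (y / w) from by ring,
      show -(y * b * γ) / w = -(b * γ) * (y / w) from by ring,
      Real.log_div (by positivity) hγ1.ne']
  have key := logS_convex γ b hγ t (y₁ / z₁) (y₂ / z₂) ht0 ht1
  have hmix : t * (y₁ / z₁) + (1 - t) * (y₂ / z₂) = (l * y₁ + (1 - l) * y₂) / z := by
    have h1t : 1 - t = (1 - l) * z₂ / z := by
      rw [hti]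
      field_simp
      rw [hz]; ring
    rw [hti, h1t]
    field_simp
  rw [hmix] at key
  have key2 : z * Real.log (γ * Real.exp (b * ((l * y₁ + (1 - l) * y₂) / z)) +
        Real.exp (-(b * γ) * ((l * y₁ + (1 - l) * y₂) / z))) ≤
      l * z₁ * Real.log (γ * Real.exp (b * (y₁ / z₁)) + Real.exp (-(b * γ) * (y₁ / z₁))) +
      (1 - l) * z₂ * Real.log (γ * Real.exp (b * (y₂ / z₂)) + Real.exp (-(b * γ) * (y₂ / z₂))) := by
    have := mul_le_mul_of_nonneg_left key hzp.le
    have hzt : z * t = l * z₁ := by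
      rw [hti]; field_simp
    have hzt' : z * (1 - t) = (1 - l) * z₂ := by
      have : z * (1 - t) = z - z * t := by ring
      rw [this, hzt]; simp [hz]
    calc z * Real.log (γ * Real.exp (b * ((l * y₁ + (1 - l) * y₂) / z)) +
          Real.exp (-(b * γ) * ((l * y₁ + (1 - l) * y₂) / z)))
        ≤ z * (t * Real.log (γ * Real.exp (b * (y₁ / z₁)) + Real.exp (-(b * γ) * (y₁ / z₁))) +
          (1 - t) * Real.log (γ * Real.exp (b * (y₂ / z₂)) + Real.exp (-(b * γ) * (y₂ / z₂)))) := this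
      _ = _ := by rw [show ∀ A B : ℝ, z * (t * A + (1 - t) * B) = (z * t) * A + (z * (1 - t)) * B
            from fun A B => by ring, hzt, hzt']
  rw [hrw _ _ hzp, hrw _ _ hz₁, hrw _ _ hz₂]
  have : l * (z₁ * (Real.log (γ * Real.exp (b * (y₁ / z₁)) + Real.exp (-(b * γ) * (y₁ / z₁))) - Real.log (1 + γ))) +
      (1 - l) * (z₂ * (Real.log (γ * Real.exp (b * (y₂ / z₂)) + Real.exp (-(b * γ) * (y₂ / z₂))) - Real.log (1 + γ))) =
      l * z₁ * Real.log (γ * Real.exp (b * (y₁ / z₁)) + Real.exp (-(b * γ) * (y₁ / z₁))) +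
      (1 - l) * z₂ * Real.log (γ * Real.exp (b * (y₂ / z₂)) + Real.exp (-(b * γ) * (y₂ / z₂))) -
      z * Real.log (1 + γ) := by
    rw [hz]; ring
  rw [this]
  nlinarith [key2]
end

section
/- Let c > 0, s ≥ 0, z ≥ 0 with s + z > 0, and let t > 0. Then the inequality c · (s + z t / 3) ≤ t² / 2 holds if and only if (c z / 3) + √( 2 c s + c² z² / 9 ) ≤ t. Consequently, for τ ∈ (0,1) with c = ln(1/τ), one has exp( −(t²/2) / (s + z t/3) ) ≤ τ if and only if (c z / 3) + √( 2 c s + c² z² / 9 ) ≤ t. -/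
/-!
The Bernstein condition `c (s + z t / 3) ≤ t² / 2` is the quadratic inequality
`t² - 2 a t - b ≥ 0` with `a = c z / 3` and `b = 2 c s ≥ 0`. Its roots are `a ± √(a² + b)`,
the smaller one is nonpositive, so for `t > 0` the inequality says exactly that `t` lies
above the larger root. The exponential form reduces to it by taking logarithms, since
`s + z t / 3 > 0`.
-/

open Real

theorem add_sqrt_le_iff_two_mul_add_le_sq {a b t : ℝ} (hb : 0 ≤ b) (ht : 0 < t) :
    a + √(a ^ 2 + b) ≤ t ↔ 2 * a * t + b ≤ t ^ 2 := by
  rw [← le_sub_iff_add_le', sqrt_le_iff, sub_nonneg]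
  constructor
  · rintro ⟨-, h⟩
    nlinarith
  · intro h
    refine ⟨?_, by nlinarith⟩
    by_contra! hta
    nlinarith

theorem exp_neg_div_le_iff_log_inv_mul_le {x q τ : ℝ} (hq : 0 < q) (hτ : 0 < τ) :
    exp (-x / q) ≤ τ ↔ log (1 / τ) * q ≤ x := by
  rw [← le_log_iff_exp_le hτ, one_div, log_inv, neg_div, neg_le, le_div_iff₀ hq]

/-- Algebraic core of Proposition 7 of the paper (Bernstein constraint as a
second-order cone constraint): for `c > 0`, `s, z ≥ 0` with `s + z > 0` and `t > 0`,
`c(s + zt/3) ≤ t²/2 ↔ cz/3 + √(2cs + c²z²/9) ≤ t`; consequently, for `τ ∈ (0,1)`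
and `c = ln(1/τ)`, `exp(−(t²/2)/(s + zt/3)) ≤ τ ↔ cz/3 + √(2cs + c²z²/9) ≤ t`. -/
theorem bernstein_socp_equivalence
    (c s z t : ℝ) (hc : 0 < c) (hs : 0 ≤ s) (hz : 0 ≤ z) (hsz : 0 < s + z)
    (ht : 0 < t) :
    (c * (s + z * t / 3) ≤ t ^ 2 / 2 ↔
      c * z / 3 + Real.sqrt (2 * c * s + c ^ 2 * z ^ 2 / 9) ≤ t) ∧
    (∀ τ : ℝ, τ ∈ Set.Ioo (0 : ℝ) 1 → c = Real.log (1 / τ) →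
      (Real.exp (-(t ^ 2 / 2) / (s + z * t / 3)) ≤ τ ↔
        c * z / 3 + Real.sqrt (2 * c * s + c ^ 2 * z ^ 2 / 9) ≤ t)) := by
  have hcone : c * (s + z * t / 3) ≤ t ^ 2 / 2 ↔
      c * z / 3 + √(2 * c * s + c ^ 2 * z ^ 2 / 9) ≤ t := by
    rw [show 2 * c * s + c ^ 2 * z ^ 2 / 9 = (c * z / 3) ^ 2 + 2 * c * s by ring,
      add_sqrt_le_iff_two_mul_add_le_sq (by positivity) ht]
    constructor <;> intro h <;> linarith
  refine ⟨hcone, fun τ hτ hcτ => ?_⟩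
  have hq : 0 < s + z * t / 3 := by nlinarith [mul_nonneg hz ht.le]
  rw [exp_neg_div_le_iff_log_inv_mul_le hq hτ.1, ← hcτ]
  exact hcone
end

section
/- Let γ > 0 and b > 0, and define Ψ⁺_{γ,b} : ℝ × (0,∞) → ℝ by Ψ⁺_{γ,b}(y, z) = z · ln( (γ e^{y b / z} + e^{−y b γ / z}) / (1 + γ) ), and Ψ_{γ,b}(y, z) = Ψ⁺_{γ,b}(|y|, z). Then: (a) for all y ∈ ℝ and z > 0, Ψ⁺_{γ,b}(−y, z) = Ψ⁺_{γ^{−1}, bγ}(y, z), so that Ψ_{γ,b}(y,z) = Ψ⁺_{γ,b}(y,z) for y ≥ 0 and Ψ_{γ,b}(y,z) = Ψ⁺_{γ^{−1}, bγ}(y,z) for y ≤ 0; (b) Ψ_{γ,b} is jointly convex on ℝ × (0,∞); (c) Ψ_{γ,b} is twice continuously differentiable on ℝ × (0,∞). -/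
open Real

/-- `Ψ_{γ,b}(y,z) = Ψ⁺_{γ,b}(|y|,z)`. -/
noncomputable def Psi (γ b y z : ℝ) : ℝ :=
  PsiPlus γ b |y| z

noncomputable def gg (γ t : ℝ) : ℝ := log ((γ * exp t + exp (-(γ * t))) / (1 + γ))
noncomputable def g1 (γ t : ℝ) : ℝ :=
  (γ * exp t + exp (-(γ * t)) * -γ) / (γ * exp t + exp (-(γ * t)))
noncomputable def g2 (γ t : ℝ) : ℝ :=
  γ * (1 + γ)^2 * (exp t * exp (-(γ * t))) / (γ * exp t + exp (-(γ * t)))^2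

lemma phi_pos {γ : ℝ} (hγ : 0 < γ) (t : ℝ) : 0 < γ * exp t + exp (-(γ * t)) := by positivity

lemma hasDerivAt_phi (γ t : ℝ) :
    HasDerivAt (fun s => γ * exp s + exp (-(γ * s))) (γ * exp t + exp (-(γ * t)) * -γ) t := by
  have h1 : HasDerivAt (fun s : ℝ => γ * exp s) (γ * exp t) t := by
    simpa [mul_comm] using (Real.hasDerivAt_exp t).const_mul γ
  have h2 : HasDerivAt (fun s : ℝ => -(γ * s)) (-γ) t := by
    exact ((hasDerivAt_id t).const_mul γ).neg.congr_deriv (by ring)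
  exact h1.add h2.exp

lemma hasDerivAt_gg {γ : ℝ} (hγ : 0 < γ) (t : ℝ) : HasDerivAt (gg γ) (g1 γ t) t := by
  have hne : (1 : ℝ) + γ ≠ 0 := by positivity
  have heq : gg γ = fun s => log (γ * exp s + exp (-(γ * s))) - log (1 + γ) := by
    funext s
    rw [gg, Real.log_div (phi_pos hγ s).ne' hne]
  rw [heq]
  exact ((hasDerivAt_phi γ t).log (phi_pos hγ t).ne').sub_const _

lemma hasDerivAt_g1 {γ : ℝ} (hγ : 0 < γ) (t : ℝ) : HasDerivAt (g1 γ) (g2 γ t) t := by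
  have hN : HasDerivAt (fun s => γ * exp s + exp (-(γ * s)) * -γ)
      (γ * exp t + exp (-(γ * t)) * -γ * -γ) t := by
    have h2 : HasDerivAt (fun s : ℝ => -(γ * s)) (-γ) t := by
      exact ((hasDerivAt_id t).const_mul γ).neg.congr_deriv (by ring)
    have h1 : HasDerivAt (fun s : ℝ => γ * exp s) (γ * exp t) t := by
      simpa [mul_comm] using (Real.hasDerivAt_exp t).const_mul γ
    exact h1.add (h2.exp.mul_const (-γ))
  have := hN.div (hasDerivAt_phi γ t) (phi_pos hγ t).ne'
  refine this.congr_deriv ?_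
  unfold g2
  have hφ := (phi_pos hγ t).ne'
  field_simp
  ring

noncomputable def kk (γ t : ℝ) : ℝ := gg γ |t|
noncomputable def k1 (γ t : ℝ) : ℝ := Real.sign t * g1 γ |t|
noncomputable def k2 (γ t : ℝ) : ℝ := g2 γ |t|

lemma g1_zero (γ : ℝ) : g1 γ 0 = 0 := by simp [g1]

lemma abs_isBigO : (fun t : ℝ => |t|) =O[nhds 0] (fun t : ℝ => t) :=
  Asymptotics.isBigO_of_le _ (fun t => by simp)

lemma hasDerivAt_kk {γ : ℝ} (hγ : 0 < γ) (t : ℝ) : HasDerivAt (kk γ) (k1 γ t) t := by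
  rcases lt_trichotomy t 0 with ht | rfl | ht
  · have h : HasDerivAt (fun s => gg γ (-s)) (g1 γ (-t) * (-1)) t :=
      (hasDerivAt_gg hγ (-t)).comp t (hasDerivAt_neg t)
    have he : (fun s => gg γ (-s)) =ᶠ[nhds t] kk γ := by
      filter_upwards [Iio_mem_nhds ht] with s hs
      simp [kk, abs_of_neg (Set.mem_Iio.1 hs)]
    have := h.congr_of_eventuallyEq he.symm
    simpa [k1, Real.sign_of_neg ht, abs_of_neg ht] using this
  · rw [show k1 γ 0 = 0 by simp [k1]]
    rw [hasDerivAt_iff_isLittleO]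
    have h0 := (hasDerivAt_gg hγ 0).isLittleO
    simp only [g1_zero, smul_zero, sub_zero] at h0
    have habs : Filter.Tendsto (fun t : ℝ => |t|) (nhds 0) (nhds 0) := by
      simpa using continuous_abs.tendsto (0:ℝ)
    have := (h0.comp_tendsto habs).trans_isBigO abs_isBigO
    simpa [kk, Function.comp_def] using this
  · have he : gg γ =ᶠ[nhds t] kk γ := by
      filter_upwards [Ioi_mem_nhds ht] with s hs
      simp [kk, abs_of_pos (Set.mem_Ioi.1 hs)]
    have := (hasDerivAt_gg hγ t).congr_of_eventuallyEq he.symm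
    simpa [k1, Real.sign_of_pos ht, abs_of_pos ht] using this

lemma hasDerivAt_k1 {γ : ℝ} (hγ : 0 < γ) (t : ℝ) : HasDerivAt (k1 γ) (k2 γ t) t := by
  rcases lt_trichotomy t 0 with ht | rfl | ht
  · have h : HasDerivAt (fun s => -g1 γ (-s)) (g2 γ (-t)) t := by
      exact ((hasDerivAt_g1 hγ (-t)).comp t (hasDerivAt_neg t)).neg.congr_deriv (by ring)
    have he : (fun s => -g1 γ (-s)) =ᶠ[nhds t] k1 γ := by
      filter_upwards [Iio_mem_nhds ht] with s hs
      simp [k1, Real.sign_of_neg (Set.mem_Iio.1 hs), abs_of_neg (Set.mem_Iio.1 hs)]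
    have := h.congr_of_eventuallyEq he.symm
    simpa [k2, abs_of_neg ht] using this
  · rw [show k2 γ 0 = g2 γ 0 by simp [k2]]
    rw [hasDerivAt_iff_isLittleO]
    have h0 := hasDerivAt_iff_isLittleO.1 (hasDerivAt_g1 hγ 0)
    simp only [g1_zero, sub_zero, smul_eq_mul] at h0
    have habs : Filter.Tendsto (fun t : ℝ => |t|) (nhds 0) (nhds 0) := by
      simpa using continuous_abs.tendsto (0:ℝ)
    have h1 : (fun s : ℝ => g1 γ |s| - |s| * g2 γ 0) =o[nhds 0] (fun s : ℝ => s) :=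
      (h0.comp_tendsto habs).trans_isBigO abs_isBigO
    have h2 : (fun s : ℝ => k1 γ s - k1 γ 0 - (s - 0) • g2 γ 0)
        =O[nhds 0] (fun s => g1 γ |s| - |s| * g2 γ 0) := by
      apply Asymptotics.isBigO_of_le
      intro s
      have hkey : k1 γ s - k1 γ 0 - (s - 0) • g2 γ 0
          = Real.sign s * (g1 γ |s| - |s| * g2 γ 0) := by
        simp only [k1, Real.sign_zero, zero_mul, sub_zero, smul_eq_mul, mul_sub]
        have hsa : Real.sign s * |s| = s := by
          rcases lt_trichotomy s 0 with h|h|h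
          · rw [Real.sign_of_neg h, abs_of_neg h]; ring
          · simp [h]
          · rw [Real.sign_of_pos h, abs_of_pos h]; ring
        rw [← mul_assoc, hsa]
      rw [hkey, norm_mul]
      have hs1 : ‖Real.sign s‖ ≤ 1 := by
        rcases lt_trichotomy s 0 with h|h|h <;>
          simp [Real.sign_of_neg, Real.sign_of_pos, h]
      calc ‖Real.sign s‖ * ‖g1 γ |s| - |s| * g2 γ 0‖
          ≤ 1 * ‖g1 γ |s| - |s| * g2 γ 0‖ := by gcongr
        _ = _ := by simp
    simpa using h2.trans_isLittleO h1
  · have he : g1 γ =ᶠ[nhds t] k1 γ := by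
      filter_upwards [Ioi_mem_nhds ht] with s hs
      simp [k1, Real.sign_of_pos (Set.mem_Ioi.1 hs), abs_of_pos (Set.mem_Ioi.1 hs)]
    have := (hasDerivAt_g1 hγ t).congr_of_eventuallyEq he.symm
    simpa [k2, abs_of_pos ht] using this

lemma continuous_g2 {γ : ℝ} (hγ : 0 < γ) : Continuous (g2 γ) := by
  apply Continuous.div
  · fun_prop
  · fun_prop
  · intro t
    exact pow_ne_zero 2 (phi_pos hγ t).ne'

lemma deriv_kk {γ : ℝ} (hγ : 0 < γ) : deriv (kk γ) = k1 γ :=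
  funext fun t => (hasDerivAt_kk hγ t).deriv

lemma deriv_k1 {γ : ℝ} (hγ : 0 < γ) : deriv (k1 γ) = k2 γ :=
  funext fun t => (hasDerivAt_k1 hγ t).deriv

lemma contDiff_kk {γ : ℝ} (hγ : 0 < γ) : ContDiff ℝ 2 (kk γ) := by
  have h2 : ((1 : WithTop ℕ∞) + 1) = 2 := by norm_num
  rw [← h2, contDiff_succ_iff_deriv]
  refine ⟨fun t => (hasDerivAt_kk hγ t).differentiableAt, by simp, ?_⟩
  rw [deriv_kk hγ, contDiff_one_iff_deriv, deriv_k1 hγ]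
  refine ⟨fun t => (hasDerivAt_k1 hγ t).differentiableAt, ?_⟩
  exact (continuous_g2 hγ).comp continuous_abs

lemma convexOn_kk {γ : ℝ} (hγ : 0 < γ) : ConvexOn ℝ Set.univ (kk γ) := by
  apply convexOn_of_deriv2_nonneg convex_univ
  · exact (contDiff_kk hγ).continuous.continuousOn
  · exact fun t _ => ((hasDerivAt_kk hγ t).differentiableAt).differentiableWithinAt
  · rw [deriv_kk hγ]
    exact fun t _ => ((hasDerivAt_k1 hγ t).differentiableAt).differentiableWithinAt
  · intro t _
    have : deriv^[2] (kk γ) t = k2 γ t := by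
      simp [Function.iterate_succ, deriv_kk hγ, deriv_k1 hγ]
    rw [this]
    unfold k2 g2
    positivity

lemma Psi_eq {γ b : ℝ} (hγ : 0 < γ) (hb : 0 < b) (y z : ℝ) (hz : 0 < z) :
    Psi γ b y z = z * kk γ (y * b / z) := by
  unfold Psi PsiPlus kk gg
  have h1 : |y * b / z| = |y| * b / z := by
    rw [abs_div, abs_mul, abs_of_pos hb, abs_of_pos hz]
  rw [h1]
  have h2 : -(γ * (|y| * b / z)) = -(|y| * b * γ) / z := by ring
  rw [h2]

lemma psiPlus_reflect {γ b : ℝ} (hγ : 0 < γ) (y z : ℝ) (hz : 0 < z) :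
    PsiPlus γ b (-y) z = PsiPlus γ⁻¹ (b * γ) y z := by
  unfold PsiPlus
  congr 1
  have hγ' : γ ≠ 0 := hγ.ne'
  have e1 : -(-y * b * γ) / z = y * (b * γ) / z := by ring
  have e2 : -(y * (b * γ) * γ⁻¹) / z = -y * b / z := by
    field_simp
  rw [e1, e2]
  have h1 : (0:ℝ) < 1 + γ := by positivity
  have h2 : (0:ℝ) < 1 + γ⁻¹ := by positivity
  congr 1
  rw [div_eq_div_iff h1.ne' h2.ne']
  field_simp
  ring


/-- Proposition 9 of the paper: the reflection identity
`Ψ⁺_{γ,b}(−y,z) = Ψ⁺_{γ⁻¹,bγ}(y,z)` (so `Ψ` coincides with `Ψ⁺_{γ,b}` for `y ≥ 0` and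
with `Ψ⁺_{γ⁻¹,bγ}` for `y ≤ 0`), joint convexity of `Ψ_{γ,b}` on `ℝ × (0,∞)`, and
twice continuous differentiability of `Ψ_{γ,b}` on `ℝ × (0,∞)`. -/
theorem psi_reflection_convex_smooth
    (γ b : ℝ) (hγ : 0 < γ) (hb : 0 < b) :
    (∀ y z : ℝ, 0 < z → PsiPlus γ b (-y) z = PsiPlus γ⁻¹ (b * γ) y z) ∧
    (∀ y z : ℝ, 0 < z → 0 ≤ y → Psi γ b y z = PsiPlus γ b y z) ∧
    (∀ y z : ℝ, 0 < z → y ≤ 0 → Psi γ b y z = PsiPlus γ⁻¹ (b * γ) y z) ∧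
    (∀ y₁ y₂ z₁ z₂ l : ℝ, 0 < z₁ → 0 < z₂ → l ∈ Set.Icc (0 : ℝ) 1 →
      Psi γ b (l * y₁ + (1 - l) * y₂) (l * z₁ + (1 - l) * z₂) ≤
        l * Psi γ b y₁ z₁ + (1 - l) * Psi γ b y₂ z₂) ∧
    ContDiffOn ℝ 2 (fun p : ℝ × ℝ => Psi γ b p.1 p.2) (Set.univ ×ˢ Set.Ioi (0 : ℝ)) := by
  refine ⟨fun y z hz => psiPlus_reflect hγ y z hz, ?_, ?_, ?_, ?_⟩
  · intro y z hz hy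
    unfold Psi
    rw [abs_of_nonneg hy]
  · intro y z hz hy
    unfold Psi
    rw [abs_of_nonpos hy]
    exact psiPlus_reflect hγ y z hz
  · intro y₁ y₂ z₁ z₂ l hz₁ hz₂ hl
    obtain ⟨hl0, hl1⟩ := hl
    have hz : 0 < l * z₁ + (1 - l) * z₂ := by
      rcases le_total z₁ z₂ with h | h
      · nlinarith
      · nlinarith
    set z := l * z₁ + (1 - l) * z₂ with hzdef
    rw [Psi_eq hγ hb _ _ hz, Psi_eq hγ hb _ _ hz₁, Psi_eq hγ hb _ _ hz₂]
    have ha : (0:ℝ) ≤ l * z₁ / z := by positivity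
    have hb' : (0:ℝ) ≤ (1 - l) * z₂ / z := by
      have : (0:ℝ) ≤ (1-l) * z₂ := by nlinarith
      positivity
    have hab : l * z₁ / z + (1 - l) * z₂ / z = 1 := by
      field_simp
      exact hzdef.symm
    have hcvx := (convexOn_kk hγ).2 (Set.mem_univ (y₁ * b / z₁)) (Set.mem_univ (y₂ * b / z₂))
      ha hb' hab
    simp only [smul_eq_mul] at hcvx
    have harg : l * z₁ / z * (y₁ * b / z₁) + (1 - l) * z₂ / z * (y₂ * b / z₂)
        = (l * y₁ + (1 - l) * y₂) * b / z := by
      field_simp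
    rw [harg] at hcvx
    have := mul_le_mul_of_nonneg_left hcvx hz.le
    calc z * kk γ ((l * y₁ + (1 - l) * y₂) * b / z)
        ≤ z * (l * z₁ / z * kk γ (y₁ * b / z₁) + (1 - l) * z₂ / z * kk γ (y₂ * b / z₂)) := this
      _ = l * (z₁ * kk γ (y₁ * b / z₁)) + (1 - l) * (z₂ * kk γ (y₂ * b / z₂)) := by
          field_simp
  · have hset : ∀ p : ℝ × ℝ, p ∈ Set.univ ×ˢ Set.Ioi (0:ℝ) → p.2 ≠ 0 :=
      fun p hp => (Set.mem_Ioi.1 hp.2).ne'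
    have hdiv : ContDiffOn ℝ 2 (fun p : ℝ × ℝ => p.1 * b / p.2)
        (Set.univ ×ˢ Set.Ioi (0:ℝ)) := by
      exact ((contDiff_fst.mul contDiff_const).contDiffOn).div contDiff_snd.contDiffOn hset
    have hcomp : ContDiffOn ℝ 2 (fun p : ℝ × ℝ => kk γ (p.1 * b / p.2))
        (Set.univ ×ˢ Set.Ioi (0:ℝ)) := (contDiff_kk hγ).comp_contDiffOn hdiv
    have hmain : ContDiffOn ℝ 2 (fun p : ℝ × ℝ => p.2 * kk γ (p.1 * b / p.2))
        (Set.univ ×ˢ Set.Ioi (0:ℝ)) := contDiff_snd.contDiffOn.mul hcomp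
    exact hmain.congr fun p hp => Psi_eq hγ hb p.1 p.2 (Set.mem_Ioi.1 hp.2)
end

section
/- For every s ≥ 0 and every γ ≥ 0, (γ e^{s} + e^{−γ s}) / (1 + γ) ≤ 1 + γ (e^{s} − 1 − s). -/
/-!
Clearing the denominator, the claim becomes `e^{-γs} ≤ 1 - γs + γ²(e^s - 1 - s)`.
Since `e^s - 1 - s ≥ s²/2` for `s ≥ 0`, it suffices that `e^{-x} ≤ 1 - x + x²/2` at `x = γs ≥ 0`.
-/

open Real

theorem Real.exp_neg_le_quadratic_of_nonneg {x : ℝ} (hx : 0 ≤ x) :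
    exp (-x) ≤ 1 - x + x ^ 2 / 2 := by
  have hq_pos : 0 < 1 - x + x ^ 2 / 2 := by nlinarith [sq_nonneg (x - 1)]
  -- `(1 - x + x²/2)(1 + x + x²/2) = 1 + x⁴/4`
  have h_one_le : 1 ≤ (1 - x + x ^ 2 / 2) * exp x :=
    calc 1 ≤ (1 - x + x ^ 2 / 2) * (1 + x + x ^ 2 / 2) := by nlinarith [pow_nonneg hx 4]
      _ ≤ (1 - x + x ^ 2 / 2) * exp x := by gcongr; exact quadratic_le_exp_of_nonneg hx
  rw [exp_neg, inv_le_iff_one_le_mul₀ (exp_pos x)]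
  linarith

/-- Appendix A.1 of the paper: the refined Bennett moment-generating-function estimator
`(γ e^s + e^{-γs})/(1+γ)` is dominated by the Bennett/Jebara estimator
`1 + γ(e^s − 1 − s)`. -/
theorem refined_bennett_le_jebara
    (s γ : ℝ) (hs : 0 ≤ s) (hγ : 0 ≤ γ) :
    (γ * Real.exp s + Real.exp (-(γ * s))) / (1 + γ) ≤
      1 + γ * (Real.exp s - 1 - s) := by
  have h_exp_s : s ^ 2 / 2 ≤ exp s - 1 - s := by linarith [quadratic_le_exp_of_nonneg hs]
  have key : exp (-(γ * s)) ≤ 1 - γ * s + γ ^ 2 * (exp s - 1 - s) :=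
    calc exp (-(γ * s)) ≤ 1 - γ * s + (γ * s) ^ 2 / 2 :=
          exp_neg_le_quadratic_of_nonneg (mul_nonneg hγ hs)
      _ = 1 - γ * s + γ ^ 2 * (s ^ 2 / 2) := by ring
      _ ≤ 1 - γ * s + γ ^ 2 * (exp s - 1 - s) := by gcongr
  rw [div_le_iff₀ (by positivity)]
  linear_combination key
end

section
/- For every s ≥ 0 and every γ with 0 ≤ γ ≤ 1, (γ e^{s} + e^{−γ s}) / (1 + γ) ≤ cosh(s), and cosh(s) ≤ e^{s²/2}. -/
open Real

lemma mul_exp_add_exp_neg_mul_le_one_add_mul_cosh {γ : ℝ} (hγ : |γ| ≤ 1) (s : ℝ) :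
    γ * exp s + exp (-(γ * s)) ≤ (1 + γ) * cosh s :=
  calc γ * exp s + exp (-(γ * s))
      = γ * exp s + exp (-γ * s) := by rw [neg_mul]
    _ ≤ γ * exp s + (cosh s + -γ * sinh s) := by
        gcongr
        exact exp_mul_le_cosh_add_mul_sinh (by rwa [abs_neg]) s
    _ = (1 + γ) * cosh s := by rw [← cosh_add_sinh]; ring

theorem refined_bennett_le_pinter_le_hoeffding_general
    (s γ : ℝ) (hγ0 : 0 ≤ γ) (hγ1 : γ ≤ 1) :
    (γ * Real.exp s + Real.exp (-(γ * s))) / (1 + γ) ≤ Real.cosh s ∧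
      Real.cosh s ≤ Real.exp (s ^ 2 / 2) := by
  refine ⟨?_, cosh_le_exp_half_sq s⟩
  rw [div_le_iff₀' (by linarith)]
  exact mul_exp_add_exp_neg_mul_le_one_add_mul_cosh (abs_le.2 ⟨by linarith, hγ1⟩) s

/-- Appendix A.1 of the paper: for `0 ≤ γ ≤ 1` the refined Bennett estimator
`(γ e^s + e^{-γs})/(1+γ)` is dominated by Pinter's estimator `cosh s`, which is in turn
dominated by Hoeffding's estimator `e^{s²/2}`. -/
theorem refined_bennett_le_pinter_le_hoeffding
    (s γ : ℝ) (hs : 0 ≤ s) (hγ0 : 0 ≤ γ) (hγ1 : γ ≤ 1) :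
    (γ * Real.exp s + Real.exp (-(γ * s))) / (1 + γ) ≤ Real.cosh s ∧
      Real.cosh s ≤ Real.exp (s ^ 2 / 2) :=
  refined_bennett_le_pinter_le_hoeffding_general s γ hγ0 hγ1
end

section
/- For every t ≥ 0, every γ ≥ 0 and every s with 0 ≤ s ≤ 1, γ (e^{t s} − 1 − t s) ≤ t (1 − s) + (γ s² + (1 − s)²) (e^{t} − 1 − t). -/
open Real

/-- Convexity of exp: `exp (x*s) - 1 ≤ s * (exp x - 1)` for `x ≥ 0`, `0 ≤ s ≤ 1`. -/
lemma exp_mul_sub_one_le (x s : ℝ) (hs0 : 0 ≤ s) (hs1 : s ≤ 1) :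
    Real.exp (x * s) - 1 ≤ s * (Real.exp x - 1) := by
  have h := convexOn_exp.2 (Set.mem_univ (0 : ℝ)) (Set.mem_univ x)
    (by linarith : (0:ℝ) ≤ 1 - s) hs0 (by ring)
  simp only [smul_eq_mul, mul_zero, zero_add, Real.exp_zero] at h
  have : Real.exp (x * s) ≤ (1 - s) * 1 + s * Real.exp x := by
    rw [mul_comm x s]; exact h
  linarith

lemma key (t s : ℝ) (ht : 0 ≤ t) (hs0 : 0 ≤ s) (hs1 : s ≤ 1) :
    Real.exp (t * s) - 1 - t * s ≤ s ^ 2 * (Real.exp t - 1 - t) := by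
  set F : ℝ → ℝ := fun x => s ^ 2 * (Real.exp x - 1 - x) - (Real.exp (x * s) - 1 - x * s)
  have hF0 : F 0 = 0 := by simp [F]
  have hderiv : ∀ x : ℝ, HasDerivAt F
      (s ^ 2 * (Real.exp x - 1) - (s * Real.exp (x * s) - s)) x := by
    intro x
    have h1 : HasDerivAt (fun x : ℝ => Real.exp (x * s)) (s * Real.exp (x * s)) x := by
      have := (Real.hasDerivAt_exp (x * s)).comp x ((hasDerivAt_id x).mul_const s)
      simpa [Function.comp_def, mul_comm] using this
    have h2 : HasDerivAt (fun x : ℝ => s ^ 2 * (Real.exp x - 1 - x))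
        (s ^ 2 * (Real.exp x - 1)) x := by
      have := (((Real.hasDerivAt_exp x).sub_const 1).sub (hasDerivAt_id x)).const_mul (s ^ 2)
      simpa using this
    have h3 : HasDerivAt (fun x : ℝ => Real.exp (x * s) - 1 - x * s)
        (s * Real.exp (x * s) - s) x := by
      have := ((h1.sub_const 1).sub ((hasDerivAt_id x).mul_const s))
      simpa [Pi.sub_def] using this
    exact h2.sub h3
  have hmono : MonotoneOn F (Set.Ici 0) := by
    apply monotoneOn_of_deriv_nonneg (convex_Ici 0)
      (Continuous.continuousOn (by fun_prop))
      (fun x _ => (hderiv x).differentiableAt.differentiableWithinAt)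
    intro x hx
    rw [interior_Ici] at hx
    rw [(hderiv x).deriv]
    have hx0 : (0:ℝ) ≤ x := le_of_lt hx
    have h := exp_mul_sub_one_le x s hs0 hs1
    have hk : Real.exp (x * s) - 1 ≤ s * (Real.exp x - 1) := h
    nlinarith [Real.exp_pos (x * s), Real.exp_pos x, sq_nonneg s,
      mul_nonneg hs0 (sub_nonneg.mpr (Real.one_le_exp hx0))]
  have := hmono (Set.self_mem_Ici) (Set.mem_Ici.mpr ht) ht
  rw [hF0] at this
  simp only [F] at this
  linarith

/-- Appendix A.1 of the paper: the Bennett/Jebara estimator is dominated by the limiting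
Cheng–Li estimator; with `s = √θ`, for all `t ≥ 0`, `γ ≥ 0` and `0 ≤ s ≤ 1`,
`γ(e^{ts} − 1 − ts) ≤ t(1 − s) + (γs² + (1 − s)²)(e^t − 1 − t)`. -/
theorem jebara_le_cheng_li
    (t γ s : ℝ) (ht : 0 ≤ t) (hγ : 0 ≤ γ) (hs0 : 0 ≤ s) (hs1 : s ≤ 1) :
    γ * (Real.exp (t * s) - 1 - t * s) ≤
      t * (1 - s) + (γ * s ^ 2 + (1 - s) ^ 2) * (Real.exp t - 1 - t) := by
  have h1 := key t s ht hs0 hs1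
  have h2 : 0 ≤ Real.exp t - 1 - t := by nlinarith [Real.add_one_le_exp t]
  have h3 : 0 ≤ t * (1 - s) := mul_nonneg ht (by linarith)
  nlinarith [mul_le_mul_of_nonneg_left h1 hγ, sq_nonneg (1 - s)]
end
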